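/- arXiv:1202.0065 — 8 statements merged into one kernel-verified Lean document; each statement's English description precedes it below -/
import Mathlib

section
/- Let φ₁₁ be a 2×3 matrix of linear forms in ℂ[X,Y,Z] whose three maximal minors ζ₁, ζ₂, ζ₃ are not all zero and have no common non-constant divisor, and let φ₂₂ be a 3×2 matrix of linear forms such that left-multiplication by φ₂₂ is an injective map (ℂ[X,Y,Z])² → (ℂ[X,Y,Z])³. Then a pair (u,v), with u a 2×3 matrix of linear forms and v a 3×2 matrix of linear forms, satisfies v·φ₁₁ + φ₂₂·u = 0 if and only if there exists a 2×2 complex (constant) matrix α with u = α·φ₁₁ and v = −φ₂₂·α. -/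
open MvPolynomial

abbrev R3 := MvPolynomial (Fin 3) ℂ

/-- The three maximal (2×2) minors of a 2×3 matrix. -/
noncomputable def minors23 (φ : Matrix (Fin 2) (Fin 3) R3) : Fin 3 → R3 :=
  ![φ 0 1 * φ 1 2 - φ 0 2 * φ 1 1,
    φ 0 0 * φ 1 2 - φ 0 2 * φ 1 0,
    φ 0 0 * φ 1 1 - φ 0 1 * φ 1 0]

/-!
Let `ζ = φ₁₁ 0 ⨯₃ φ₁₁ 1`; up to the sign of its middle entry it is the vector of maximal minors,
and `φ₁₁ ζ = 0`. From `v φ₁₁ + φ₂₂ u = 0` we get `φ₂₂ (u ζ) = 0`, hence `u ζ = 0`. A vector `w`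
with `w ⬝ ζ = 0` satisfies Cramer's rule `ζ_k w = (w ⨯ φ₁)_k φ₀ + (φ₀ ⨯ w)_k φ₁`, and by the
vector triple product `w ⨯ φ₁` and `φ₀ ⨯ w` are parallel to `ζ`. As the entries of `ζ` have no
common factor, parallel means `c • ζ` for a polynomial `c`, so `w = c₀ φ₀ + c₁ φ₁`; comparing
degrees, `c₀, c₁` are constants when `w` is linear. Thus `u = α φ₁₁`, and then
`(v + φ₂₂ α) φ₁₁ = 0` forces `v = -φ₂₂ α`, because `ζ ≠ 0` makes the rows of `φ₁₁` independent.
-/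

open Matrix

theorem ne_zero_of_forall_dvd_isUnit {R ι : Type*} [CommMonoidWithZero R] [Nontrivial R]
    {ζ : ι → R} (hcop : ∀ d, (∀ k, d ∣ ζ k) → IsUnit d) : ζ ≠ 0 := by
  rintro rfl
  exact not_isUnit_zero (hcop 0 fun _ => dvd_refl 0)

section CommRing

variable {R : Type*} [CommRing R]

theorem mul_eq_mul_of_cross_eq_zero {A ζ : Fin 3 → R} (h : A ⨯₃ ζ = 0) (j k : Fin 3) :
    A j * ζ k = A k * ζ j := by
  have h0 := congrFun h 0
  have h1 := congrFun h 1
  have h2 := congrFun h 2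
  simp only [cross_apply, Pi.zero_apply, cons_val] at h0 h1 h2
  fin_cases j <;> fin_cases k <;> grind

theorem cross_apply_smul_eq_of_dotProduct_cross_eq_zero {a b w : Fin 3 → R}
    (h : w ⬝ᵥ a ⨯₃ b = 0) (k : Fin 3) :
    (a ⨯₃ b) k • w = (w ⨯₃ b) k • a + (a ⨯₃ w) k • b := by
  rw [vec3_dotProduct] at h
  simp only [cross_apply, cons_val] at h
  ext j
  fin_cases k <;> fin_cases j <;>
    simp only [cross_apply, Pi.add_apply, Pi.smul_apply, smul_eq_mul, cons_val, Fin.isValue,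
      Fin.zero_eta, Fin.mk_one, Fin.reduceFinMk] <;>
    grind

theorem mulVec_cross_rows_eq_zero (φ : Matrix (Fin 2) (Fin 3) R) : φ *ᵥ (φ 0 ⨯₃ φ 1) = 0 := by
  ext i
  fin_cases i
  · exact dot_self_cross _ _
  · exact dot_cross_self _ _

theorem vecMul_cross_row_one (c : Fin 2 → R) (φ : Matrix (Fin 2) (Fin 3) R) :
    (c ᵥ* φ) ⨯₃ φ 1 = c 0 • (φ 0 ⨯₃ φ 1) := by
  simp [vecMul_eq_sum, Fin.sum_univ_two, cross_self]

theorem row_zero_cross_vecMul (c : Fin 2 → R) (φ : Matrix (Fin 2) (Fin 3) R) :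
    φ 0 ⨯₃ (c ᵥ* φ) = c 1 • (φ 0 ⨯₃ φ 1) := by
  simp [vecMul_eq_sum, Fin.sum_univ_two, cross_self]

end CommRing

section Domain

variable {R : Type*} [CommRing R] [IsDomain R]

theorem vecMul_injective_of_cross_ne_zero {φ : Matrix (Fin 2) (Fin 3) R}
    (hφ : φ 0 ⨯₃ φ 1 ≠ 0) : Function.Injective (· ᵥ* φ) := by
  intro c c' (h : c ᵥ* φ = c' ᵥ* φ)
  have h0 := vecMul_cross_row_one c φ
  have h1 := row_zero_cross_vecMul c φ
  rw [h, vecMul_cross_row_one] at h0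
  rw [h, row_zero_cross_vecMul] at h1
  ext i
  fin_cases i
  · exact smul_left_injective R hφ h0.symm
  · exact smul_left_injective R hφ h1.symm

theorem exists_eq_smul_of_mul_eq_mul [GCDMonoid R] {ι : Type*} {A ζ : ι → R}
    (hcop : ∀ d, (∀ k, d ∣ ζ k) → IsUnit d) (h : ∀ j k, A j * ζ k = A k * ζ j) :
    ∃ a : R, A = a • ζ := by
  obtain ⟨K, hK⟩ : ∃ K, ζ K ≠ 0 := Function.ne_iff.1 (ne_zero_of_forall_dvd_isUnit hcop)
  obtain ⟨p, q, hA, hζ, hpq⟩ := extract_gcd (A K) (ζ K)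
  have hg : gcd (A K) (ζ K) ≠ 0 := fun h0 => hK (by rw [hζ, h0, zero_mul])
  have hq_mul : ∀ j, A j * q = p * ζ j := fun j => by
    apply mul_left_cancel₀ hg
    linear_combination h j K - A j * hζ + ζ j * hA
  obtain ⟨r, hr⟩ := isUnit_iff_exists_inv.1 <| hcop q fun j =>
    (gcd_isUnit_iff_isRelPrime.1 hpq).symm.dvd_of_dvd_mul_left ⟨A j, by rw [← hq_mul, mul_comm]⟩
  refine ⟨p * r, funext fun j => ?_⟩
  rw [Pi.smul_apply, smul_eq_mul]
  linear_combination (-A j) * hr + r * hq_mul j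

theorem eq_zero_of_mul_eq_zero_of_cross_ne_zero {m : Type*} {M : Matrix m (Fin 2) R}
    {φ : Matrix (Fin 2) (Fin 3) R} (hφ : φ 0 ⨯₃ φ 1 ≠ 0) (h : M * φ = 0) : M = 0 :=
  funext fun i => vecMul_injective_of_cross_ne_zero hφ <| by
    show M i ᵥ* φ = 0 ᵥ* φ
    rw [zero_vecMul]
    exact congrFun h i

theorem exists_vecMul_eq_of_dotProduct_cross_eq_zero [GCDMonoid R] {φ : Matrix (Fin 2) (Fin 3) R}
    (hcop : ∀ d, (∀ k, d ∣ (φ 0 ⨯₃ φ 1) k) → IsUnit d) {w : Fin 3 → R}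
    (hw : w ⬝ᵥ φ 0 ⨯₃ φ 1 = 0) : ∃ c, w = c ᵥ* φ := by
  obtain ⟨c₀, hc₀⟩ := exists_eq_smul_of_mul_eq_mul hcop <|
    mul_eq_mul_of_cross_eq_zero (A := w ⨯₃ φ 1) <| by
    rw [cross_cross_eq_smul_sub_smul, hw, dot_cross_self, zero_smul, zero_smul, sub_zero]
  obtain ⟨c₁, hc₁⟩ := exists_eq_smul_of_mul_eq_mul hcop <|
    mul_eq_mul_of_cross_eq_zero (A := φ 0 ⨯₃ w) <| by
    rw [cross_cross_eq_smul_sub_smul, hw, dot_self_cross, zero_smul, zero_smul, sub_zero]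
  obtain ⟨K, hK⟩ : ∃ K, (φ 0 ⨯₃ φ 1) K ≠ 0 :=
    Function.ne_iff.1 (ne_zero_of_forall_dvd_isUnit hcop)
  refine ⟨![c₀, c₁], smul_right_injective _ hK ?_⟩
  simp only [cross_apply_smul_eq_of_dotProduct_cross_eq_zero hw K, hc₀, hc₁, vecMul_eq_sum,
    Fin.sum_univ_two]
  simp [smul_smul, mul_comm]

end Domain

theorem MvPolynomial.exists_eq_C_of_isHomogeneous_mul {σ R : Type*} [CommRing R] [IsDomain R]
    {p q : MvPolynomial σ R} {n : ℕ} (hq : q.IsHomogeneous n) (hq0 : q ≠ 0)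
    (hpq : (p * q).IsHomogeneous n) : ∃ c, p = C c := by
  by_cases hp : p = 0
  · exact ⟨0, by rw [hp, C_0]⟩
  have hdeg := hpq.totalDegree (mul_ne_zero hp hq0)
  rw [totalDegree_mul_of_isDomain hp hq0, hq.totalDegree hq0, Nat.add_eq_right] at hdeg
  exact ⟨_, totalDegree_eq_zero_iff_eq_C.1 hdeg⟩

theorem MvPolynomial.isHomogeneous_cross_apply {σ R : Type*} [CommRing R] {m n : ℕ}
    {a b : Fin 3 → MvPolynomial σ R} (ha : ∀ i, (a i).IsHomogeneous m)
    (hb : ∀ i, (b i).IsHomogeneous n) (k : Fin 3) : ((a ⨯₃ b) k).IsHomogeneous (m + n) := by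
  fin_cases k <;> exact ((ha _).mul (hb _)).sub ((ha _).mul (hb _))

theorem MvPolynomial.exists_eq_C_comp_of_isHomogeneous_vecMul {σ R : Type*} [CommRing R]
    [IsDomain R] {n : ℕ} {φ : Matrix (Fin 2) (Fin 3) (MvPolynomial σ R)}
    (hφ : ∀ i j, (φ i j).IsHomogeneous n) (hζ : φ 0 ⨯₃ φ 1 ≠ 0) {c : Fin 2 → MvPolynomial σ R}
    (hc : ∀ j, ((c ᵥ* φ) j).IsHomogeneous n) : ∃ a : Fin 2 → R, c = C ∘ a := by
  obtain ⟨K, hK⟩ : ∃ K, (φ 0 ⨯₃ φ 1) K ≠ 0 := Function.ne_iff.1 hζ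
  have hζK := isHomogeneous_cross_apply (hφ 0) (hφ 1) K
  have hconst : ∀ i, ∃ a, c i = C a := by
    intro i
    fin_cases i
    · have h := isHomogeneous_cross_apply hc (hφ 1) K
      rw [vecMul_cross_row_one, Pi.smul_apply, smul_eq_mul] at h
      exact exists_eq_C_of_isHomogeneous_mul hζK hK h
    · have h := isHomogeneous_cross_apply (hφ 0) hc K
      rw [row_zero_cross_vecMul, Pi.smul_apply, smul_eq_mul] at h
      exact exists_eq_C_of_isHomogeneous_mul hζK hK h
  choose a ha using hconst
  exact ⟨a, _root_.funext ha⟩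

theorem MvPolynomial.exists_C_comp_vecMul_eq_of_dotProduct_cross_eq_zero {σ R : Type*}
    [CommRing R] [IsDomain R] [UniqueFactorizationMonoid R] {n : ℕ}
    {φ : Matrix (Fin 2) (Fin 3) (MvPolynomial σ R)} (hφ : ∀ i j, (φ i j).IsHomogeneous n)
    (hcop : ∀ d, (∀ k, d ∣ (φ 0 ⨯₃ φ 1) k) → IsUnit d) {w : Fin 3 → MvPolynomial σ R}
    (hw : ∀ j, (w j).IsHomogeneous n) (hwζ : w ⬝ᵥ φ 0 ⨯₃ φ 1 = 0) :
    ∃ a : Fin 2 → R, w = (C ∘ a) ᵥ* φ := by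
  let := UniqueFactorizationMonoid.toGCDMonoid (MvPolynomial σ R)
  obtain ⟨c, rfl⟩ := exists_vecMul_eq_of_dotProduct_cross_eq_zero hcop hwζ
  obtain ⟨a, rfl⟩ :=
    exists_eq_C_comp_of_isHomogeneous_vecMul hφ (ne_zero_of_forall_dvd_isUnit hcop) hw
  exact ⟨a, rfl⟩

theorem cross_rows_eq_minors23 (φ : Matrix (Fin 2) (Fin 3) R3) :
    φ 0 ⨯₃ φ 1 = ![minors23 φ 0, -minors23 φ 1, minors23 φ 2] := by
  ext k
  fin_cases k <;> simp [cross_apply, minors23]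

theorem forall_dvd_cross_rows_iff (φ : Matrix (Fin 2) (Fin 3) R3) (d : R3) :
    (∀ k, d ∣ (φ 0 ⨯₃ φ 1) k) ↔ ∀ k, d ∣ minors23 φ k := by
  simp [cross_rows_eq_minors23, Fin.forall_fin_succ]

theorem isUnit_of_forall_dvd_cross_rows {φ : Matrix (Fin 2) (Fin 3) R3}
    (hnz : ∃ k, minors23 φ k ≠ 0)
    (hnocd : ∀ d : R3, (∀ k, d ∣ minors23 φ k) → ∃ c : ℂ, d = C c) {d : R3}
    (hd : ∀ k, d ∣ (φ 0 ⨯₃ φ 1) k) : IsUnit d := by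
  rw [forall_dvd_cross_rows_iff] at hd
  obtain ⟨c, rfl⟩ := hnocd d hd
  obtain ⟨K, hK⟩ := hnz
  have hc : c ≠ 0 := by
    rintro rfl
    exact hK (by simpa using hd K)
  exact (isUnit_iff_ne_zero.2 hc).map C

theorem stmt3_general (φ₁₁ : Matrix (Fin 2) (Fin 3) R3) (φ₂₂ : Matrix (Fin 3) (Fin 2) R3)
    (h11L : ∀ i j, (φ₁₁ i j).IsHomogeneous 1)
    (hnz : ∃ k, minors23 φ₁₁ k ≠ 0)
    (hnocd : ∀ d : R3, (∀ k, d ∣ minors23 φ₁₁ k) → ∃ c : ℂ, d = C c)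
    (hinj : Function.Injective fun w : Fin 2 → R3 => φ₂₂.mulVec w)
    (u : Matrix (Fin 2) (Fin 3) R3) (v : Matrix (Fin 3) (Fin 2) R3)
    (hu : ∀ i j, (u i j).IsHomogeneous 1) :
    v * φ₁₁ + φ₂₂ * u = 0 ↔
      ∃ α : Matrix (Fin 2) (Fin 2) ℂ,
        u = α.map (fun c => (C c : R3)) * φ₁₁ ∧
        v = -(φ₂₂ * α.map (fun c => (C c : R3))) := by
  have hcop : ∀ d, (∀ k, d ∣ (φ₁₁ 0 ⨯₃ φ₁₁ 1) k) → IsUnit d := fun _ =>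
    isUnit_of_forall_dvd_cross_rows hnz hnocd
  constructor
  · intro h
    have hu0 : u *ᵥ (φ₁₁ 0 ⨯₃ φ₁₁ 1) = 0 := hinj <| by
      show φ₂₂ *ᵥ (u *ᵥ (φ₁₁ 0 ⨯₃ φ₁₁ 1)) = φ₂₂ *ᵥ 0
      rw [mulVec_mulVec, eq_neg_of_add_eq_zero_right h, neg_mulVec, ← mulVec_mulVec,
        mulVec_cross_rows_eq_zero, mulVec_zero, neg_zero, mulVec_zero]
    choose α hα using fun i =>
      exists_C_comp_vecMul_eq_of_dotProduct_cross_eq_zero h11L hcop (hu i) (congrFun hu0 i)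
    have hu' : u = (of α).map (fun c => (C c : R3)) * φ₁₁ := funext hα
    refine ⟨of α, hu', eq_neg_of_add_eq_zero_left <|
      eq_zero_of_mul_eq_zero_of_cross_ne_zero (ne_zero_of_forall_dvd_isUnit hcop) ?_⟩
    rw [Matrix.add_mul, Matrix.mul_assoc, ← hu', h]
  · rintro ⟨α, rfl, rfl⟩
    rw [Matrix.neg_mul, Matrix.mul_assoc, neg_add_cancel]

/-- Suppose the maximal minors of the 2×3 matrix of linear forms `φ₁₁` are not all zero and
have no common non-constant divisor, and left multiplication by the 3×2 matrix of linear
forms `φ₂₂` is injective.  Then a pair `(u,v)` of matrices of linear forms satisfies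
`v·φ₁₁ + φ₂₂·u = 0` iff `u = α·φ₁₁` and `v = −φ₂₂·α` for some constant 2×2 matrix `α`. -/
theorem stmt3 (φ₁₁ : Matrix (Fin 2) (Fin 3) R3) (φ₂₂ : Matrix (Fin 3) (Fin 2) R3)
    (h11L : ∀ i j, (φ₁₁ i j).IsHomogeneous 1) (h22L : ∀ i j, (φ₂₂ i j).IsHomogeneous 1)
    (hnz : ∃ k, minors23 φ₁₁ k ≠ 0)
    (hnocd : ∀ d : R3, (∀ k, d ∣ minors23 φ₁₁ k) → ∃ c : ℂ, d = C c)
    (hinj : Function.Injective fun w : Fin 2 → R3 => φ₂₂.mulVec w)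
    (u : Matrix (Fin 2) (Fin 3) R3) (v : Matrix (Fin 3) (Fin 2) R3)
    (hu : ∀ i j, (u i j).IsHomogeneous 1) (hv : ∀ i j, (v i j).IsHomogeneous 1) :
    v * φ₁₁ + φ₂₂ * u = 0 ↔
      ∃ α : Matrix (Fin 2) (Fin 2) ℂ,
        u = α.map (fun c => (C c : R3)) * φ₁₁ ∧
        v = -(φ₂₂ * α.map (fun c => (C c : R3))) :=
  stmt3_general φ₁₁ φ₂₂ h11L hnz hnocd hinj u v hu
end

section
/- Let (x,y,z) and (r,s,t) be bases of the space of linear forms in ℂ[X,Y,Z], and let Φ = [[−y, x, 0], [−z, 0, x], [0, −z, y]] and Ψ = [[−s, −t, 0], [r, 0, −t], [0, r, s]]. If γ is a 3×3 complex (constant) matrix satisfying Ψ·γ·Φ = 0 as matrices over ℂ[X,Y,Z], then γ = 0. (This is the central step in the computation showing that the solution space K(φ₁₁,φ₂₂) has dimension 4 when the maximal minors of φ₁₁ and of φ₂₂ have common linear factors.) -/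
/-!
Evaluating at `p ∈ ℂ³` turns `Ψ` and `Φ` into the constant Koszul matrices `Ψ(b)` and
`Φ(a) = Ψ(a)ᵀ` of `a = (x,y,z)(p)` and `b = (r,s,t)(p)`. The forms are linear and span all linear
forms, so `p ↦ a` and `p ↦ b` are invertible linear maps; hence `b = P a` with `P` invertible and
`Ψ(P a) γ Ψ(a)ᵀ = 0` for every `a`. Since `Ψ(b) v = (v₂, -v₁, v₀) × b`, a nonzero `v` is killed by
`Ψ(b)` only for `b` on one line. For `a = e_j` the factor `Ψ(e_j)ᵀ` exposes two columns of `γ`,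
which must then be killed by `Ψ(P e_j)`; each column is exposed by two different `j`, and the
corresponding `P e_j` are independent, so each column of `γ` vanishes.
-/

open MvPolynomial

/-- The Koszul matrix `Φ` associated to a triple of linear forms `(x,y,z)`. -/
noncomputable def PhiM (x y z : R3) : Matrix (Fin 3) (Fin 3) R3 :=
  !![-y, x, 0; -z, 0, x; 0, -z, y]

/-- The Koszul matrix `Ψ` associated to a triple of linear forms `(r,s,t)`. -/
noncomputable def PsiM (r s t : R3) : Matrix (Fin 3) (Fin 3) R3 :=
  !![-s, -t, 0; r, 0, -t; 0, r, s]

open Matrix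

section Koszul

variable {K : Type*}

def koszulMatrix [Neg K] [Zero K] (a : Fin 3 → K) : Matrix (Fin 3) (Fin 3) K :=
  !![-a 1, -a 2, 0; a 0, 0, -a 2; 0, a 0, a 1]

theorem koszulMatrix_mulVec [CommRing K] (a v : Fin 3 → K) :
    koszulMatrix a *ᵥ v = ![v 2, -v 1, v 0] ⨯₃ a := by
  ext i
  fin_cases i <;>
    simp [koszulMatrix, cross_apply, mulVec, dotProduct, Fin.sum_univ_three] <;> ring

variable [Field K]

theorem eq_zero_of_cross_eq_zero {w a b : Fin 3 → K} (hab : LinearIndependent K ![a, b])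
    (ha : w ⨯₃ a = 0) (hb : w ⨯₃ b = 0) : w = 0 := by
  by_contra hw
  have hmul : ∀ c, w ⨯₃ c = 0 → ∃ μ : K, μ • w = c := fun c hc => by
    by_contra! h
    exact crossProduct_ne_zero_iff_linearIndependent.2 ((LinearIndependent.pair_iff' hw).2 h) hc
  obtain ⟨μ, rfl⟩ := hmul a ha
  obtain ⟨ν, rfl⟩ := hmul b hb
  obtain ⟨-, hμ⟩ := LinearIndependent.pair_iff.1 hab ν (-μ) (by
    rw [smul_smul, smul_smul, neg_mul, neg_smul, mul_comm, add_neg_cancel])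
  exact hab.ne_zero 0 (by simp [neg_eq_zero.1 hμ])

theorem eq_zero_of_koszulMatrix_mulVec_eq_zero {v a b : Fin 3 → K}
    (hab : LinearIndependent K ![a, b]) (ha : koszulMatrix a *ᵥ v = 0)
    (hb : koszulMatrix b *ᵥ v = 0) : v = 0 := by
  rw [koszulMatrix_mulVec] at ha hb
  have h := eq_zero_of_cross_eq_zero hab ha hb
  ext i
  fin_cases i
  exacts [by simpa using congrFun h 2, by simpa using congrFun h 1, by simpa using congrFun h 0]

theorem mulVec_single_eq_zero_of_mul_transpose_koszulMatrix_single
    {M : Matrix (Fin 3) (Fin 3) K} {j m : Fin 3} (h : M * (koszulMatrix (Pi.single j 1))ᵀ = 0)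
    (hjm : m + j ≠ 2) :
    M *ᵥ Pi.single m 1 = 0 := by
  ext i
  have h0 := congrFun (congrFun h i) 0
  have h1 := congrFun (congrFun h i) 1
  have h2 := congrFun (congrFun h i) 2
  fin_cases j <;> fin_cases m <;>
    simp [koszulMatrix, mul_apply, Fin.sum_univ_three] at h0 h1 h2 hjm ⊢ <;> assumption

theorem eq_zero_of_koszulMatrix_mul_mul_transpose_eq_zero {P γ : Matrix (Fin 3) (Fin 3) K}
    (hP : IsUnit P) (h : ∀ a, koszulMatrix (P *ᵥ a) * γ * (koszulMatrix a)ᵀ = 0) : γ = 0 := by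
  have hcol : ∀ m, γ *ᵥ Pi.single m 1 = 0 := by
    intro m
    have hkill : ∀ j, m + j ≠ 2 → koszulMatrix (P.col j) *ᵥ (γ *ᵥ Pi.single m 1) = 0 :=
      fun j hj => by
        rw [mulVec_mulVec, ← mulVec_single_one]
        exact mulVec_single_eq_zero_of_mul_transpose_koszulMatrix_single (h _) hj
    -- `j = -m` and `j = 1 - m` are the two indices with `m + j ≠ 2`
    have hindep : LinearIndependent K ![P.col (-m), P.col (1 - m)] := by
      convert (linearIndependent_cols_iff_isUnit.2 hP).comp ![-m, 1 - m]
        (injective_pair_iff_ne.2 (by fin_cases m <;> decide)) using 1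
      ext i; fin_cases i <;> rfl
    exact eq_zero_of_koszulMatrix_mulVec_eq_zero hindep
      (hkill _ (by fin_cases m <;> decide)) (hkill _ (by fin_cases m <;> decide))
  ext i m
  simpa using congrFun (hcol m) i

end Koszul

namespace MvPolynomial

theorem IsHomogeneous.exists_eval_eq_dotProduct {σ R : Type*} [Fintype σ] [CommSemiring R]
    {q : MvPolynomial σ R} (hq : q.IsHomogeneous 1) : ∃ c : σ → R, ∀ p, eval p q = c ⬝ᵥ p := by
  have hq' : q ∈ Submodule.span R (Set.range X) := by
    rw [← homogeneousSubmodule_one_eq_span_X]; exact hq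
  obtain ⟨c, rfl⟩ := (Submodule.mem_span_range_iff_exists_fun R).1 hq'
  exact ⟨c, fun p => by simp [dotProduct]⟩

theorem exists_matrix_mulVec_eq_eval_comp {n σ R : Type*} [Fintype σ] [CommSemiring R]
    {v : n → MvPolynomial σ R} (hv : ∀ i, (v i).IsHomogeneous 1) :
    ∃ A : Matrix n σ R, ∀ p, A *ᵥ p = eval p ∘ v := by
  choose c hc using fun i => (hv i).exists_eval_eq_dotProduct
  refine ⟨Matrix.of c, fun p => ?_⟩
  ext i
  exact (hc i p).symm

theorem isUnit_of_mulVec_eq_eval_comp {σ K : Type*} [Fintype σ] [DecidableEq σ] [Field K]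
    {v : σ → MvPolynomial σ K} {A : Matrix σ σ K} (hA : ∀ p, A *ᵥ p = eval p ∘ v)
    (hv : ∀ q : MvPolynomial σ K, q.IsHomogeneous 1 → q ∈ Submodule.span K (Set.range v)) :
    IsUnit A := by
  rw [← mulVec_injective_iff_isUnit, ← coe_mulVecLin, ← LinearMap.ker_eq_bot,
    LinearMap.ker_eq_bot']
  intro p hp
  have hle : Submodule.span K (Set.range v) ≤ LinearMap.ker (aeval p).toLinearMap :=
    Submodule.span_le.2 (Set.range_subset_iff.2 fun i => by
      simpa [hA] using congrFun hp i)
  funext j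
  simpa using hle (hv (X j) (isHomogeneous_X K j))

end MvPolynomial

theorem map_eval_PsiM (r s t : R3) (p : Fin 3 → ℂ) :
    (PsiM r s t).map (eval p) = koszulMatrix (eval p ∘ ![r, s, t]) := by
  ext i j; fin_cases i <;> fin_cases j <;> simp [PsiM, koszulMatrix]

theorem map_eval_PhiM (x y z : R3) (p : Fin 3 → ℂ) :
    (PhiM x y z).map (eval p) = (koszulMatrix (eval p ∘ ![x, y, z]))ᵀ := by
  ext i j; fin_cases i <;> fin_cases j <;> simp [PhiM, koszulMatrix]

theorem stmt6_general (x y z r s t : R3)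
    (hx : x.IsHomogeneous 1) (hy : y.IsHomogeneous 1) (hz : z.IsHomogeneous 1)
    (hr : r.IsHomogeneous 1) (hs : s.IsHomogeneous 1) (ht : t.IsHomogeneous 1)
    (hS₁ : ∀ p : R3, p.IsHomogeneous 1 → p ∈ Submodule.span ℂ ({x, y, z} : Set R3))
    (hS₂ : ∀ p : R3, p.IsHomogeneous 1 → p ∈ Submodule.span ℂ ({r, s, t} : Set R3))
    (γ : Matrix (Fin 3) (Fin 3) ℂ)
    (hγ : PsiM r s t * γ.map (fun c => (C c : R3)) * PhiM x y z = 0) :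
    γ = 0 := by
  obtain ⟨A, hA⟩ := exists_matrix_mulVec_eq_eval_comp (n := Fin 3) (v := ![x, y, z])
    (by simp [Fin.forall_fin_succ, *])
  obtain ⟨B, hB⟩ := exists_matrix_mulVec_eq_eval_comp (n := Fin 3) (v := ![r, s, t])
    (by simp [Fin.forall_fin_succ, *])
  have hAu : IsUnit A := isUnit_of_mulVec_eq_eval_comp hA
    (by rwa [range_cons, range_cons_cons_empty, Set.singleton_union])
  have hBu : IsUnit B := isUnit_of_mulVec_eq_eval_comp hB
    (by rwa [range_cons, range_cons_cons_empty, Set.singleton_union])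
  have hpoint : ∀ p, koszulMatrix (B *ᵥ p) * γ * (koszulMatrix (A *ᵥ p))ᵀ = 0 := fun p => by
    have h := congrArg (Matrix.map · (eval p)) hγ
    have hγp : (γ.map fun c => (C c : R3)).map (eval p) = γ := by ext; simp
    rwa [Matrix.map_mul, Matrix.map_mul, map_eval_PsiM, map_eval_PhiM, hγp, ← hA, ← hB,
      Matrix.map_zero _ (map_zero _)] at h
  refine eq_zero_of_koszulMatrix_mul_mul_transpose_eq_zero
    (hBu.mul (isUnit_nonsing_inv_iff.2 hAu)) fun a => ?_
  simpa [mulVec_mulVec, mul_nonsing_inv _ ((isUnit_iff_isUnit_det A).1 hAu)] using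
    hpoint (A⁻¹ *ᵥ a)

/-- Let `(x,y,z)` and `(r,s,t)` be bases of the space of linear forms in `ℂ[X,Y,Z]`,
and `Φ`, `Ψ` the associated Koszul matrices.  If a constant 3×3 matrix `γ` satisfies
`Ψ·γ·Φ = 0`, then `γ = 0`. -/
theorem stmt6 (x y z r s t : R3)
    (hx : x.IsHomogeneous 1) (hy : y.IsHomogeneous 1) (hz : z.IsHomogeneous 1)
    (hr : r.IsHomogeneous 1) (hs : s.IsHomogeneous 1) (ht : t.IsHomogeneous 1)
    (hI₁ : LinearIndependent ℂ ![x, y, z]) (hI₂ : LinearIndependent ℂ ![r, s, t])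
    (hS₁ : ∀ p : R3, p.IsHomogeneous 1 → p ∈ Submodule.span ℂ ({x, y, z} : Set R3))
    (hS₂ : ∀ p : R3, p.IsHomogeneous 1 → p ∈ Submodule.span ℂ ({r, s, t} : Set R3))
    (γ : Matrix (Fin 3) (Fin 3) ℂ)
    (hγ : PsiM r s t * γ.map (fun c => (C c : R3)) * PhiM x y z = 0) :
    γ = 0 :=
  stmt6_general x y z r s t hx hy hz hr hs ht hS₁ hS₂ γ hγ
end

section
/- Let ℓ₁, ℓ₂ be nonzero linear forms and q₁, q₂ quadratic forms in ℂ[X,Y,Z] with ℓ₁ ∤ q₁ and ℓ₂ ∤ q₂. Then the ℂ-vector space of quadruples (v₁, v₂, u₁, u₂), where v₁ and u₂ are linear forms and v₂ and u₁ are quadratic forms, satisfying the four equations v₁·q₁ + ℓ₂·u₁ = 0, v₁·ℓ₁ + ℓ₂·u₂ = 0, v₂·q₁ + q₂·u₁ = 0, v₂·ℓ₁ + q₂·u₂ = 0, is one-dimensional, spanned by (ℓ₂, q₂, −q₁, −ℓ₁). (This is the kernel computation underlying the fibre ℙ²³ in the description of the codimension-6 stratum X₅ of M_{P²}(6,3)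 as a bundle over Hilb_{P²}(2) × Hilb_{P²}(2).) -/
/-!
A nonzero linear form `ℓ₂` is prime. It divides `v₁ q₁` and `v₁ ℓ₁`; if it did not divide `v₁`
it would divide `ℓ₁`, hence be associated to it, and then `ℓ₁ ∣ q₁`. So `v₁ = c ℓ₂` for a
scalar `c`, and cancelling `ℓ₂` and then `q₁` in the first three equations determines
`u₁`, `u₂` and `v₂`.
-/

open MvPolynomial

namespace MvPolynomial

variable {σ : Type*}

theorem irreducible_of_isHomogeneous_one {K : Type*} [Field K] {p : MvPolynomial σ K}
    (hp : p.IsHomogeneous 1) (hp0 : p ≠ 0) : Irreducible p :=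
  irreducible_of_totalDegree_eq_one (hp.totalDegree hp0) fun x hx =>
    isUnit_iff_ne_zero.mpr fun hx0 => hp0 <| MvPolynomial.ext _ _ fun i => by
      simpa [hx0] using hx i

theorem exists_eq_C_mul_of_dvd_of_isHomogeneous {R : Type*} [CommRing R] [IsDomain R] {n : ℕ}
    {l v : MvPolynomial σ R} (hl : l.IsHomogeneous n) (hv : v.IsHomogeneous n) (hl0 : l ≠ 0)
    (h : l ∣ v) : ∃ c : R, v = C c * l := by
  obtain ⟨w, rfl⟩ := h
  obtain rfl | hw0 := eq_or_ne w 0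
  · exact ⟨0, by simp⟩
  have hw : w.totalDegree = 0 := by
    have := hv.totalDegree (mul_ne_zero hl0 hw0)
    rw [totalDegree_mul_of_isDomain hl0 hw0, hl.totalDegree hl0] at this
    omega
  exact ⟨w.coeff 0, by rw [mul_comm, ← totalDegree_eq_zero_iff_eq_C.mp hw]⟩

end MvPolynomial

theorem Prime.dvd_of_dvd_mul_of_dvd_mul {α : Type*} [CommMonoidWithZero α] [IsCancelMulZero α]
    {p a b v : α} (hp : Prime p) (ha : Irreducible a) (hab : ¬ a ∣ b) (hb : p ∣ v * b)
    (ha' : p ∣ v * a) : p ∣ v := by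
  by_contra hpv
  have hpa := (hp.dvd_or_dvd ha').resolve_left hpv
  have hpb := (hp.dvd_or_dvd hb).resolve_left hpv
  exact hab ((hp.irreducible.associated_of_dvd ha hpa).dvd_iff_dvd_left.mp hpb)

theorem stmt8_general (l₁ l₂ q₁ q₂ : R3)
    (hl₁ : l₁.IsHomogeneous 1) (hl₂ : l₂.IsHomogeneous 1)
    (hl₁0 : l₁ ≠ 0) (hl₂0 : l₂ ≠ 0)
    (hq₁ : q₁.IsHomogeneous 2) (hq₂ : q₂.IsHomogeneous 2)
    (hnd₁ : ¬ l₁ ∣ q₁) :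
    {p : R3 × R3 × R3 × R3 |
        p.1.IsHomogeneous 1 ∧ p.2.1.IsHomogeneous 2 ∧ p.2.2.1.IsHomogeneous 2 ∧
        p.2.2.2.IsHomogeneous 1 ∧
        p.1 * q₁ + l₂ * p.2.2.1 = 0 ∧ p.1 * l₁ + l₂ * p.2.2.2 = 0 ∧
        p.2.1 * q₁ + q₂ * p.2.2.1 = 0 ∧ p.2.1 * l₁ + q₂ * p.2.2.2 = 0}
      = {p : R3 × R3 × R3 × R3 |
          ∃ c : ℂ, p = (c • l₂, c • q₂, -(c • q₁), -(c • l₁))} := by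
  have hq₁0 : q₁ ≠ 0 := fun h => hnd₁ (h ▸ dvd_zero l₁)
  ext ⟨v₁, v₂, u₁, u₂⟩
  simp only [Set.mem_ofPred_eq, smul_eq_C_mul, Prod.mk.injEq]
  constructor
  · rintro ⟨hv₁, -, -, -, e₁, e₂, e₃, -⟩
    have hl₂v₁ : l₂ ∣ v₁ :=
      (irreducible_of_isHomogeneous_one hl₂ hl₂0).prime.dvd_of_dvd_mul_of_dvd_mul
        (irreducible_of_isHomogeneous_one hl₁ hl₁0) hnd₁
        ⟨-u₁, by linear_combination e₁⟩ ⟨-u₂, by linear_combination e₂⟩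
    obtain ⟨c, rfl⟩ := exists_eq_C_mul_of_dvd_of_isHomogeneous hl₂ hv₁ hl₂0 hl₂v₁
    obtain rfl : u₁ = -(C c * q₁) := mul_left_cancel₀ hl₂0 (by linear_combination e₁)
    obtain rfl : u₂ = -(C c * l₁) := mul_left_cancel₀ hl₂0 (by linear_combination e₂)
    obtain rfl : v₂ = C c * q₂ := mul_left_cancel₀ hq₁0 (by linear_combination e₃)
    exact ⟨c, rfl, rfl, rfl, rfl⟩
  · rintro ⟨c, rfl, rfl, rfl, rfl⟩
    refine ⟨hl₂.C_mul c, hq₂.C_mul c, (hq₁.C_mul c).neg, (hl₁.C_mul c).neg, ?_, ?_, ?_, ?_⟩ <;>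
      ring

/-- Let `ℓ₁, ℓ₂` be nonzero linear forms and `q₁, q₂` quadratic forms in `ℂ[X,Y,Z]` with
`ℓ₁ ∤ q₁` and `ℓ₂ ∤ q₂`.  The space of quadruples `(v₁,v₂,u₁,u₂)` (with `v₁, u₂` linear
and `v₂, u₁` quadratic) satisfying `v₁·q₁ + ℓ₂·u₁ = 0`, `v₁·ℓ₁ + ℓ₂·u₂ = 0`,
`v₂·q₁ + q₂·u₁ = 0`, `v₂·ℓ₁ + q₂·u₂ = 0` is one-dimensional, spanned by
`(ℓ₂, q₂, −q₁, −ℓ₁)`. -/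
theorem stmt8 (l₁ l₂ q₁ q₂ : R3)
    (hl₁ : l₁.IsHomogeneous 1) (hl₂ : l₂.IsHomogeneous 1)
    (hl₁0 : l₁ ≠ 0) (hl₂0 : l₂ ≠ 0)
    (hq₁ : q₁.IsHomogeneous 2) (hq₂ : q₂.IsHomogeneous 2)
    (hnd₁ : ¬ l₁ ∣ q₁) (hnd₂ : ¬ l₂ ∣ q₂) :
    {p : R3 × R3 × R3 × R3 |
        p.1.IsHomogeneous 1 ∧ p.2.1.IsHomogeneous 2 ∧ p.2.2.1.IsHomogeneous 2 ∧
        p.2.2.2.IsHomogeneous 1 ∧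
        p.1 * q₁ + l₂ * p.2.2.1 = 0 ∧ p.1 * l₁ + l₂ * p.2.2.2 = 0 ∧
        p.2.1 * q₁ + q₂ * p.2.2.1 = 0 ∧ p.2.1 * l₁ + q₂ * p.2.2.2 = 0}
      = {p : R3 × R3 × R3 × R3 |
          ∃ c : ℂ, p = (c • l₂, c • q₂, -(c • q₁), -(c • l₁))} :=
  stmt8_general l₁ l₂ q₁ q₂ hl₁ hl₂ hl₁0 hl₂0 hq₁ hq₂ hnd₁
end

section
/- Let q₁ be a quadratic form in the variables Y, Z only, q₂ a quadratic form in X, Z only, f₁ a cubic form in X, Z only, f₂ a cubic form in Y, Z only, p a quartic form in ℂ[X,Y,Z], and a ∈ ℂ. Suppose there exist linear forms ℓ₁', ℓ₂' and quadratic forms q₁', q₂' in ℂ[X,Y,Z] such that f₁ = Y·q₁' + ℓ₂'·q₁, a·Z² = Y·ℓ₁' + ℓ₂'·X, p = q₂·q₁' + q₂'·q₁, and f₂ = q₂·ℓ₁' + q₂'·X. Then a = 0, f₁ = 0, f₂ = 0, and p = 0. (This is the claim A ∩ T_ψZ = {0} in the first case of the fibre analysis of the subvariety E₁ of the blow-up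 B.) -/
open MvPolynomial

lemma X_dvd_iff' {σ R : Type*} [CommRing R] {i : σ} {p : MvPolynomial σ R} :
    X i ∣ p ↔ ∀ m ∈ p.support, m i ≠ 0 := by
  rw [← Ideal.mem_span_singleton, ← Set.image_singleton, mem_ideal_span_X_image]
  simp

lemma X_dvd_of_X_mul {σ R : Type*} [CommRing R] {i j : σ} (hij : i ≠ j)
    {p : MvPolynomial σ R} (h : X i ∣ X j * p) : X i ∣ p := by
  rw [X_dvd_iff'] at h ⊢
  intro m hm
  have h2 : (Finsupp.single j 1 + m) ∈ (X j * p).support := by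
    rw [mem_support_iff, coeff_X_mul]
    exact mem_support_iff.mp hm
  have := h _ h2
  simpa [Finsupp.single_apply, hij.symm] using this

lemma zero_of_X_dvd {σ R : Type*} [CommRing R] {i : σ} {p : MvPolynomial σ R}
    (h : X i ∣ p) (hv : i ∉ p.vars) : p = 0 := by
  rw [X_dvd_iff'] at h
  rw [← support_eq_empty]
  by_contra hne
  obtain ⟨m, hm⟩ := Finset.nonempty_iff_ne_empty.mpr hne
  exact hv (mem_vars i |>.mpr ⟨m, hm, Finsupp.mem_support_iff.mpr (h m hm)⟩)

/-- Let `q₁` be a quadratic form in `Y,Z` only, `q₂` a quadratic form in `X,Z` only,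
`f₁` a cubic form in `X,Z` only, `f₂` a cubic form in `Y,Z` only, `p` a quartic form and
`a ∈ ℂ`.  If there are linear forms `ℓ₁', ℓ₂'` and quadratic forms `q₁', q₂'` with
`f₁ = Y·q₁' + ℓ₂'·q₁`, `a·Z² = Y·ℓ₁' + ℓ₂'·X`, `p = q₂·q₁' + q₂'·q₁` and
`f₂ = q₂·ℓ₁' + q₂'·X`, then `a = 0`, `f₁ = 0`, `f₂ = 0` and `p = 0`.
(Here `X, Y, Z` are the variables `X 0, X 1, X 2`.) -/
theorem stmt10 (q₁ q₂ f₁ f₂ p : R3) (a : ℂ) (l₁' l₂' q₁' q₂' : R3)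
    (hq₁ : q₁.IsHomogeneous 2) (hq₁v : q₁.vars ⊆ {1, 2})
    (hq₂ : q₂.IsHomogeneous 2) (hq₂v : q₂.vars ⊆ {0, 2})
    (hf₁ : f₁.IsHomogeneous 3) (hf₁v : f₁.vars ⊆ {0, 2})
    (hf₂ : f₂.IsHomogeneous 3) (hf₂v : f₂.vars ⊆ {1, 2})
    (hp : p.IsHomogeneous 4)
    (hl₁' : l₁'.IsHomogeneous 1) (hl₂' : l₂'.IsHomogeneous 1)
    (hq₁' : q₁'.IsHomogeneous 2) (hq₂' : q₂'.IsHomogeneous 2)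
    (e₁ : f₁ = X 1 * q₁' + l₂' * q₁)
    (e₂ : C a * X 2 ^ 2 = X 1 * l₁' + l₂' * X 0)
    (e₃ : p = q₂ * q₁' + q₂' * q₁)
    (e₄ : f₂ = q₂ * l₁' + q₂' * X 0) :
    a = 0 ∧ f₁ = 0 ∧ f₂ = 0 ∧ p = 0 := by
  have ha : a = 0 := by
    have := congrArg (eval ![(0:ℂ),0,1]) e₂
    simpa using this
  subst ha
  rw [map_zero, zero_mul] at e₂
  have hd : X 0 ∣ l₁' := by
    apply X_dvd_of_X_mul (show (0 : Fin 3) ≠ 1 by decide)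
    have h' : X 1 * l₁' = -(l₂' * X 0) := by linear_combination -e₂
    rw [h']
    exact dvd_neg.mpr (Dvd.intro_left _ rfl)
  obtain ⟨g, hg⟩ := hd
  have hsum : X 1 * g + l₂' = 0 := by
    have h0 : X 0 * (X 1 * g + l₂') = 0 := by linear_combination -e₂ - X 1 * hg
    rcases mul_eq_zero.mp h0 with h | h
    · exact absurd h (X_ne_zero 0)
    · exact h
  have hdf₁ : X 1 ∣ f₁ := ⟨q₁' - g * q₁, by linear_combination e₁ + q₁ * hsum⟩
  have hf₁0 : f₁ = 0 := zero_of_X_dvd hdf₁ (fun h => absurd (hf₁v h) (by decide))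
  have hq : q₁' - g * q₁ = 0 := by
    have h0 : X 1 * (q₁' - g * q₁) = 0 := by linear_combination hf₁0 - e₁ - q₁ * hsum
    rcases mul_eq_zero.mp h0 with h | h
    · exact absurd h (X_ne_zero 1)
    · exact h
  have hdf₂ : X 0 ∣ f₂ := ⟨q₂ * g + q₂', by linear_combination e₄ + q₂ * hg⟩
  have hf₂0 : f₂ = 0 := zero_of_X_dvd hdf₂ (fun h => absurd (hf₂v h) (by decide))
  have hq₂s : q₂ * g + q₂' = 0 := by
    have h0 : X 0 * (q₂ * g + q₂') = 0 := by linear_combination hf₂0 - e₄ - q₂ * hg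
    rcases mul_eq_zero.mp h0 with h | h
    · exact absurd h (X_ne_zero 0)
    · exact h
  refine ⟨rfl, hf₁0, hf₂0, ?_⟩
  linear_combination e₃ + q₂ * hq + q₁ * hq₂s
end

section
/- Let q₁ be a nonzero quadratic form in Y, Z only, q₂ a nonzero quadratic form in X, Z only, f₁ a cubic form in X, Z only, f₂ a cubic form in Y, Z only, p a quartic form in ℂ[X,Y,Z], and a ∈ ℂ. Write q₁ = Y·λ₁ + a₁·Z² with λ₁ a linear form in Y, Z only and a₁ ∈ ℂ, and q₂ = X·λ₂ + a₂·Z² with λ₂ a linear form in X, Z only and a₂ ∈ ℂ. If a·Z²·q₁·q₂ − q₁·Y·f₂ − X·f₁·q₂ + X·Y·p = 0, then f₁ = 0, f₂ = 0, a·a₁ = 0, a·a₂ = 0, and p = −a·Z²·λ₁·λ₂. (This computes, in the first case, the intersection of E₁ with the fibre ℙ(N_s) of the exceptional divisor.) -/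
open MvPolynomial

lemma aux_fix (j : Fin 3) (s : R3) (hs : j ∉ s.vars) :
    aeval (fun i : Fin 3 => if i = j then 0 else X i) s = s := by
  have h1 : (eval₂Hom (algebraMap ℂ R3) (fun i : Fin 3 => if i = j then 0 else X i)) s
      = (eval₂Hom (algebraMap ℂ R3) X) s := by
    refine eval₂Hom_congr' rfl (fun i hi _ => ?_) rfl
    have : i ≠ j := by rintro rfl; exact hs hi
    simp [this]
  simpa using h1

/-- Let `q₁ = Y·λ₁ + a₁·Z²` be a nonzero quadratic form in `Y,Z` only,
`q₂ = X·λ₂ + a₂·Z²` a nonzero quadratic form in `X,Z` only, `f₁` a cubic form in `X,Z`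
only, `f₂` a cubic form in `Y,Z` only, `p` a quartic form and `a ∈ ℂ`.  If
`a·Z²·q₁·q₂ − q₁·Y·f₂ − X·f₁·q₂ + X·Y·p = 0` then `f₁ = 0`, `f₂ = 0`, `a·a₁ = 0`,
`a·a₂ = 0` and `p = −a·Z²·λ₁·λ₂`. -/
theorem stmt11 (q₁ q₂ f₁ f₂ p lam₁ lam₂ : R3) (a a₁ a₂ : ℂ)
    (hq₁ : q₁.IsHomogeneous 2) (hq₁v : q₁.vars ⊆ {1, 2}) (hq₁0 : q₁ ≠ 0)
    (hq₂ : q₂.IsHomogeneous 2) (hq₂v : q₂.vars ⊆ {0, 2}) (hq₂0 : q₂ ≠ 0)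
    (hf₁ : f₁.IsHomogeneous 3) (hf₁v : f₁.vars ⊆ {0, 2})
    (hf₂ : f₂.IsHomogeneous 3) (hf₂v : f₂.vars ⊆ {1, 2})
    (hp : p.IsHomogeneous 4)
    (hlam₁ : lam₁.IsHomogeneous 1) (hlam₁v : lam₁.vars ⊆ {1, 2})
    (hlam₂ : lam₂.IsHomogeneous 1) (hlam₂v : lam₂.vars ⊆ {0, 2})
    (hq₁eq : q₁ = X 1 * lam₁ + C a₁ * X 2 ^ 2)
    (hq₂eq : q₂ = X 0 * lam₂ + C a₂ * X 2 ^ 2)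
    (heq : C a * X 2 ^ 2 * q₁ * q₂ - q₁ * X 1 * f₂ - X 0 * f₁ * q₂ + X 0 * X 1 * p = 0) :
    f₁ = 0 ∧ f₂ = 0 ∧ a * a₁ = 0 ∧ a * a₂ = 0 ∧ p = -(C a * X 2 ^ 2 * lam₁ * lam₂) := by
  set φ : R3 →ₐ[ℂ] R3 := aeval (fun i : Fin 3 => if i = 0 then 0 else X i) with hφdef
  set ψ : R3 →ₐ[ℂ] R3 := aeval (fun i : Fin 3 => if i = 1 then 0 else X i) with hψdef
  have φq₁ : φ q₁ = q₁ := aux_fix 0 q₁ (fun h => absurd (hq₁v h) (by decide))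
  have φf₂ : φ f₂ = f₂ := aux_fix 0 f₂ (fun h => absurd (hf₂v h) (by decide))
  have ψq₂ : ψ q₂ = q₂ := aux_fix 1 q₂ (fun h => absurd (hq₂v h) (by decide))
  have ψf₁ : ψ f₁ = f₁ := aux_fix 1 f₁ (fun h => absurd (hf₁v h) (by decide))
  have φX0 : φ (X 0) = 0 := by simp [hφdef]
  have φX1 : φ (X 1) = X 1 := by simp [hφdef]
  have φX2 : φ (X 2) = X 2 := by simp [hφdef]
  have ψX0 : ψ (X 0) = X 0 := by simp [hψdef]
  have ψX1 : ψ (X 1) = 0 := by simp [hψdef]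
  have ψX2 : ψ (X 2) = X 2 := by simp [hψdef]
  have φC : ∀ c : ℂ, φ (C c) = C c := fun c => by
    rw [← algebraMap_eq]; exact φ.commutes c
  have ψC : ∀ c : ℂ, ψ (C c) = C c := fun c => by
    rw [← algebraMap_eq]; exact ψ.commutes c
  have hX0 : (X 0 : R3) ≠ 0 := X_ne_zero 0
  have hX1 : (X 1 : R3) ≠ 0 := X_ne_zero 1
  -- first: substitute X0 → 0
  have h0 := congrArg φ heq
  rw [hq₂eq] at h0
  simp only [map_add, map_sub, map_mul, map_pow, map_zero, φX0, φX1, φX2, φq₁, φf₂, φC,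
    AlgHom.commutes, algebraMap_eq, zero_mul, mul_zero, add_zero, zero_add, sub_zero] at h0
  have h1 : q₁ * (C a * C a₂ * X 2 ^ 4 - X 1 * f₂) = 0 := by linear_combination h0
  have h2 : C a * C a₂ * X 2 ^ 4 - X 1 * f₂ = 0 := by
    rcases mul_eq_zero.mp h1 with h | h
    · exact absurd h hq₁0
    · exact h
  have h3 := congrArg ψ h2
  simp only [map_sub, map_mul, map_pow, map_zero, ψX1, ψX2, ψC, AlgHom.commutes, algebraMap_eq,
    zero_mul, sub_zero] at h3
  have ha₂ : a * a₂ = 0 := by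
    have : (C (a * a₂) : R3) * X 2 ^ 4 = 0 := by rw [C_mul]; linear_combination h3
    rcases mul_eq_zero.mp this with h | h
    · exact (C_injective (Fin 3) ℂ) (by simpa using h)
    · exact absurd h (pow_ne_zero _ (X_ne_zero 2))
  have hf₂0 : f₂ = 0 := by
    have hX1f : X 1 * f₂ = 0 := by
      have hC : (C (a * a₂) : R3) = 0 := by rw [ha₂]; exact map_zero C
      rw [C_mul] at hC
      linear_combination -h2 + (X 2 ^ 4) * hC
    rcases mul_eq_zero.mp hX1f with h | h
    · exact absurd h hX1
    · exact h
  -- second: substitute X1 → 0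
  have g0 := congrArg ψ heq
  rw [hq₁eq] at g0
  simp only [map_add, map_sub, map_mul, map_pow, map_zero, ψX0, ψX1, ψX2, ψq₂, ψf₁, ψC,
    AlgHom.commutes, algebraMap_eq, zero_mul, mul_zero, add_zero, zero_add, sub_zero] at g0
  have g1 : q₂ * (C a * C a₁ * X 2 ^ 4 - X 0 * f₁) = 0 := by linear_combination g0
  have g2 : C a * C a₁ * X 2 ^ 4 - X 0 * f₁ = 0 := by
    rcases mul_eq_zero.mp g1 with h | h
    · exact absurd h hq₂0
    · exact h
  have g3 := congrArg φ g2
  simp only [map_sub, map_mul, map_pow, map_zero, φX0, φX2, φC, AlgHom.commutes, algebraMap_eq,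
    zero_mul, sub_zero] at g3
  have ha₁ : a * a₁ = 0 := by
    have : (C (a * a₁) : R3) * X 2 ^ 4 = 0 := by rw [C_mul]; linear_combination g3
    rcases mul_eq_zero.mp this with h | h
    · exact (C_injective (Fin 3) ℂ) (by simpa using h)
    · exact absurd h (pow_ne_zero _ (X_ne_zero 2))
  have hf₁0 : f₁ = 0 := by
    have hX0f : X 0 * f₁ = 0 := by
      have hC : (C (a * a₁) : R3) = 0 := by rw [ha₁]; exact map_zero C
      rw [C_mul] at hC
      linear_combination -g2 + (X 2 ^ 4) * hC
    rcases mul_eq_zero.mp hX0f with h | h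
    · exact absurd h hX0
    · exact h
  -- final
  have hC1 : (C a : R3) * C a₁ = 0 := by
    rw [← C_mul, ha₁]; exact map_zero C
  have hC2 : (C a : R3) * C a₂ = 0 := by
    rw [← C_mul, ha₂]; exact map_zero C
  have key : X 0 * X 1 * (p + C a * X 2 ^ 2 * lam₁ * lam₂) = 0 := by
    rw [hq₁eq, hq₂eq, hf₁0, hf₂0] at heq
    linear_combination heq - (X 1 * lam₁ * X 2 ^ 4) * hC2 - (X 0 * lam₂ * X 2 ^ 4) * hC1
      - (C a₂ * X 2 ^ 6) * hC1
  have hfin : p + C a * X 2 ^ 2 * lam₁ * lam₂ = 0 := by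
    rcases mul_eq_zero.mp key with h | h
    · rcases mul_eq_zero.mp h with h' | h'
      · exact absurd h' hX0
      · exact absurd h' hX1
    · exact h
  exact ⟨hf₁0, hf₂0, ha₁, ha₂, by linear_combination hfin⟩
end

section
/- Let q₁, q₂, q be quadratic forms in the variables Y, Z only, f₁, f₂ cubic forms in Y, Z only, and p a quartic form in ℂ[X,Y,Z]. Suppose there exist linear forms ℓ₁', ℓ₂' and quadratic forms q₁', q₂' in ℂ[X,Y,Z] such that f₁ = X·q₁' + ℓ₂'·q₁, q = X·ℓ₁' + ℓ₂'·X, p = q₂·q₁' + q₂'·q₁, and f₂ = q₂·ℓ₁' + q₂'·X. Then there exists a linear form ℓ in Y, Z only such that q = 0, p = 0, f₁ = −ℓ·q₁, and f₂ = ℓ·q₂. (This is the computation of A ∩ T_ψZ in the second case of the fibre analysis of E₁.) -/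
open MvPolynomial

/-!
Reduce everything modulo `X`: writing `ℓ₂' = m + X·t` with `m` free of `X`, each of the four
relations becomes `a = X·u + c` with `a` and `c` free of `X`, and comparing the `X`-degrees
forces `u = 0`. This gives `ℓ₁' = -ℓ₂'`, `q₁' = -t·q₁`, `q₂' = t·q₂`, whence `q = p = 0`,
`f₁ = m·q₁` and `f₂ = -m·q₂`; take `ℓ = -m`.
-/

namespace MvPolynomial

variable {σ R : Type*}

section CommSemiring

variable [CommSemiring R]

theorem mem_vars_mul_X_self {p : MvPolynomial σ R} (i : σ) (hp : p ≠ 0) :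
    i ∈ (p * X i).vars := by
  rw [mem_vars_iff_degreeOf_ne_zero, (degreeOf_mul_X_eq_degreeOf_add_one_iff i p).mpr hp]
  exact Nat.succ_ne_zero _

theorem notMem_vars_mul {p q : MvPolynomial σ R} {i : σ} (hp : i ∉ p.vars) (hq : i ∉ q.vars) :
    i ∉ (p * q).vars := by
  classical
  exact fun h => (Finset.mem_union.mp (vars_mul p q h)).elim hp hq

theorem notMem_vars_aeval_update_X_zero [DecidableEq σ] (i : σ) (p : MvPolynomial σ R) :
    i ∉ (aeval (Function.update (X (R := R)) i 0) p).vars := by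
  intro h
  obtain ⟨j, -, hj⟩ := Finset.mem_biUnion.mp (vars_bind₁ _ p h)
  rcases eq_or_ne j i with rfl | hji
  · simp at hj
  · rw [Function.update_of_ne hji, mem_vars_iff_degreeOf_ne_zero] at hj
    exact hj (degreeOf_X_of_ne hji.symm)

theorem IsHomogeneous.aeval_update_X_zero [DecidableEq σ] {p : MvPolynomial σ R} {n : ℕ}
    (hp : p.IsHomogeneous n) (i : σ) :
    (MvPolynomial.aeval (Function.update (X (R := R)) i 0) p).IsHomogeneous n := by
  have hX : ∀ j, (Function.update (X (R := R)) i 0 j).IsHomogeneous 1 := fun j => by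
    rcases eq_or_ne j i with rfl | hji
    · simpa using isHomogeneous_zero σ R 1
    · simpa [Function.update_of_ne hji] using isHomogeneous_X R j
  simpa using hp.aeval _ hX

end CommSemiring

section CommRing

variable [CommRing R]

theorem X_dvd_sub_aeval_update_X_zero [DecidableEq σ] (i : σ) (p : MvPolynomial σ R) :
    X i ∣ p - aeval (Function.update (X (R := R)) i 0) p := by
  rw [← Ideal.mem_span_singleton, ← Ideal.Quotient.eq]
  suffices h : (Ideal.Quotient.mkₐ R (Ideal.span {X i})).comp (AlgHom.id R _) =
      (Ideal.Quotient.mkₐ R (Ideal.span {X i})).comp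
        (aeval (Function.update (X (R := R)) i 0)) from
    congr($h p)
  ext j
  rcases eq_or_ne j i with rfl | hji
  · simp
  · simp [Function.update_of_ne hji]

theorem eq_zero_of_eq_X_mul_add {a u c : MvPolynomial σ R} {i : σ}
    (h : a = X i * u + c) (ha : i ∉ a.vars) (hc : i ∉ c.vars) : u = 0 := by
  classical
  by_contra hu
  have hac : i ∈ (a - c).vars := by
    rw [h, add_sub_cancel_right, mul_comm]
    exact mem_vars_mul_X_self i hu
  exact (Finset.mem_union.mp (vars_sub_subset (p := a) (q := c) hac)).elim ha hc

end CommRing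

end MvPolynomial

theorem R3.vars_subset_one_two_iff {p : R3} : p.vars ⊆ {1, 2} ↔ (0 : Fin 3) ∉ p.vars := by
  refine ⟨fun h h0 => by simpa using h h0, fun h j hj => ?_⟩
  fin_cases j
  · exact absurd hj h
  all_goals simp

theorem stmt12_general (q₁ q₂ q f₁ f₂ p : R3) (l₁' l₂' q₁' q₂' : R3)
    (hq₁v : q₁.vars ⊆ {1, 2})
    (hq₂v : q₂.vars ⊆ {1, 2})
    (hqv : q.vars ⊆ {1, 2})
    (hf₁v : f₁.vars ⊆ {1, 2})
    (hf₂v : f₂.vars ⊆ {1, 2})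
    (hl₂' : l₂'.IsHomogeneous 1)
    (e₁ : f₁ = X 0 * q₁' + l₂' * q₁)
    (e₂ : q = X 0 * l₁' + l₂' * X 0)
    (e₃ : p = q₂ * q₁' + q₂' * q₁)
    (e₄ : f₂ = q₂ * l₁' + q₂' * X 0) :
    ∃ l : R3, l.IsHomogeneous 1 ∧ l.vars ⊆ {1, 2} ∧
      q = 0 ∧ p = 0 ∧ f₁ = -(l * q₁) ∧ f₂ = l * q₂ := by
  simp only [R3.vars_subset_one_two_iff] at hq₁v hq₂v hqv hf₁v hf₂v ⊢
  set m := aeval (Function.update (X : Fin 3 → R3) 0 0) l₂'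
  have hm : (0 : Fin 3) ∉ m.vars := notMem_vars_aeval_update_X_zero 0 l₂'
  obtain ⟨t, ht⟩ := X_dvd_sub_aeval_update_X_zero 0 l₂'
  have hl : l₁' + l₂' = 0 :=
    eq_zero_of_eq_X_mul_add (c := 0) (by rw [e₂]; ring) hqv (by simp)
  have ht₁ : q₁' + t * q₁ = 0 :=
    eq_zero_of_eq_X_mul_add (by rw [e₁]; linear_combination q₁ * ht) hf₁v
      (notMem_vars_mul hm hq₁v)
  have ht₂ : q₂' - t * q₂ = 0 :=
    eq_zero_of_eq_X_mul_add (c := -(m * q₂))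
      (by rw [e₄]; linear_combination q₂ * hl - q₂ * ht) hf₂v
      (by rw [vars_neg]; exact notMem_vars_mul hm hq₂v)
  refine ⟨-m, (hl₂'.aeval_update_X_zero 0).neg, by rwa [vars_neg], ?_, ?_, ?_, ?_⟩
  · rw [e₂]; linear_combination X 0 * hl
  · rw [e₃]; linear_combination q₂ * ht₁ + q₁ * ht₂
  · rw [e₁]; linear_combination X 0 * ht₁ + q₁ * ht
  · rw [e₄]; linear_combination q₂ * hl - q₂ * ht + X 0 * ht₂

/-- Let `q₁, q₂, q` be quadratic forms in `Y,Z` only, `f₁, f₂` cubic forms in `Y,Z` only,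
and `p` a quartic form.  If there are linear forms `ℓ₁', ℓ₂'` and quadratic forms
`q₁', q₂'` with `f₁ = X·q₁' + ℓ₂'·q₁`, `q = X·ℓ₁' + ℓ₂'·X`, `p = q₂·q₁' + q₂'·q₁` and
`f₂ = q₂·ℓ₁' + q₂'·X`, then there is a linear form `ℓ` in `Y,Z` only such that `q = 0`,
`p = 0`, `f₁ = −ℓ·q₁` and `f₂ = ℓ·q₂`. -/
theorem stmt12 (q₁ q₂ q f₁ f₂ p : R3) (l₁' l₂' q₁' q₂' : R3)
    (hq₁ : q₁.IsHomogeneous 2) (hq₁v : q₁.vars ⊆ {1, 2})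
    (hq₂ : q₂.IsHomogeneous 2) (hq₂v : q₂.vars ⊆ {1, 2})
    (hq : q.IsHomogeneous 2) (hqv : q.vars ⊆ {1, 2})
    (hf₁ : f₁.IsHomogeneous 3) (hf₁v : f₁.vars ⊆ {1, 2})
    (hf₂ : f₂.IsHomogeneous 3) (hf₂v : f₂.vars ⊆ {1, 2})
    (hp : p.IsHomogeneous 4)
    (hl₁' : l₁'.IsHomogeneous 1) (hl₂' : l₂'.IsHomogeneous 1)
    (hq₁' : q₁'.IsHomogeneous 2) (hq₂' : q₂'.IsHomogeneous 2)
    (e₁ : f₁ = X 0 * q₁' + l₂' * q₁)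
    (e₂ : q = X 0 * l₁' + l₂' * X 0)
    (e₃ : p = q₂ * q₁' + q₂' * q₁)
    (e₄ : f₂ = q₂ * l₁' + q₂' * X 0) :
    ∃ l : R3, l.IsHomogeneous 1 ∧ l.vars ⊆ {1, 2} ∧
      q = 0 ∧ p = 0 ∧ f₁ = -(l * q₁) ∧ f₂ = l * q₂ :=
  stmt12_general q₁ q₂ q f₁ f₂ p l₁' l₂' q₁' q₂' hq₁v hq₂v hqv hf₁v hf₂v hl₂' e₁ e₂ e₃ e₄
end

section
/- Let q₁, q₂ be nonzero homogeneous polynomials of degree 2 in the polynomial ring ℂ[Y,Z] in two variables, and let g be a common divisor of q₁ and q₂ of maximal degree d (so d ∈ {0,1,2}). Then the ℂ-vector space of pairs (f₁, f₂) of homogeneous polynomials of degree 3 in ℂ[Y,Z] satisfying f₁·q₂ + f₂·q₁ = 0 has dimension 2 + d. In particular: if q₁, q₂ have no common non-constant divisor the space is {(q₁·h, −q₂·h) : h linear} of dimension 2; if q₂ is a nonzero scalar multiple of q₁ the dimension is 4; and if the greatest common divisor is linear the dimension is 3. (These dimension counts show that the restriction of the blow-down map E₁ → Δ₁ is an isomorphism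 away from the diagonal Δ and has fibres ℙ¹ over Δ.) -/
open MvPolynomial

abbrev R2 := MvPolynomial (Fin 2) ℂ

namespace Stmt14Aux

open Finset

lemma td_eq (p : R2) : p.totalDegree = p.support.sup Finsupp.degree := rfl

lemma hc_top_ne_zero {a : R2} (ha : a ≠ 0) :
    homogeneousComponent a.totalDegree a ≠ 0 := by
  obtain ⟨u, hu, hdeg⟩ := Finset.exists_mem_eq_sup a.support
    (support_nonempty.mpr ha) Finsupp.degree
  intro h
  have h1 : coeff u (homogeneousComponent a.totalDegree a) = coeff u a := by
    rw [coeff_homogeneousComponent, if_pos]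
    rw [td_eq, hdeg]
  rw [h, coeff_zero] at h1
  exact (mem_support_iff.mp hu) h1.symm

lemma hc_mul_proj {a b : R2} {s t : ℕ} (hs : s ≤ a.totalDegree) (ht : t ≤ b.totalDegree)
    (H : ∀ i j, homogeneousComponent i a ≠ 0 → homogeneousComponent j b ≠ 0 →
      i + j = s + t → i = s ∧ j = t) :
    homogeneousComponent (s + t) (a * b)
      = homogeneousComponent s a * homogeneousComponent t b := by
  have key : ∀ i j : ℕ,
      homogeneousComponent (s + t) (homogeneousComponent i a * homogeneousComponent j b)
        = if s + t = i + j then homogeneousComponent i a * homogeneousComponent j b else 0 :=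
    fun i j => homogeneousComponent_of_mem
      (((homogeneousComponent_isHomogeneous i a).mul
        (homogeneousComponent_isHomogeneous j b)))
  calc homogeneousComponent (s + t) (a * b)
      = ∑ i ∈ range (a.totalDegree + 1), ∑ j ∈ range (b.totalDegree + 1),
          homogeneousComponent (s + t)
            (homogeneousComponent i a * homogeneousComponent j b) := by
        conv_lhs => rw [← sum_homogeneousComponent a, ← sum_homogeneousComponent b]
        rw [Finset.sum_mul_sum, map_sum]
        exact Finset.sum_congr rfl fun i _ => map_sum _ _ _
    _ = homogeneousComponent s a * homogeneousComponent t b := by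
        rw [Finset.sum_eq_single s]
        · rw [Finset.sum_eq_single t]
          · rw [key, if_pos rfl]
          · intro j _ hj
            rw [key, if_neg (by omega)]
          · intro hmem
            exact absurd (Finset.mem_range.mpr (by omega)) hmem
        · intro i _ hi
          apply Finset.sum_eq_zero
          intro j _
          rw [key]
          split_ifs with hij
          · by_contra hne
            have h1 : homogeneousComponent i a ≠ 0 := fun h => hne (by rw [h, zero_mul])
            have h2 : homogeneousComponent j b ≠ 0 := fun h => hne (by rw [h, mul_zero])
            exact hi (H i j h1 h2 hij.symm).1
          · rfl
        · intro hmem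
          exact absurd (Finset.mem_range.mpr (by omega)) hmem

/-- In a domain, factors of a nonzero homogeneous polynomial are homogeneous. -/
lemma homog_of_mul {a b : R2} {n : ℕ} (ha : a ≠ 0) (hb : b ≠ 0)
    (hab : (a * b).IsHomogeneous n) :
    a.IsHomogeneous a.totalDegree ∧ b.IsHomogeneous b.totalDegree ∧
      a.totalDegree + b.totalDegree = n := by
  have hta : homogeneousComponent a.totalDegree a ≠ 0 := hc_top_ne_zero ha
  have htb : homogeneousComponent b.totalDegree b ≠ 0 := hc_top_ne_zero hb
  have hSa : {i | homogeneousComponent i a ≠ 0}.Nonempty := ⟨_, hta⟩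
  have hSb : {i | homogeneousComponent i b ≠ 0}.Nonempty := ⟨_, htb⟩
  have hla : homogeneousComponent (sInf {i | homogeneousComponent i a ≠ 0}) a ≠ 0 :=
    Nat.sInf_mem hSa
  have hlb : homogeneousComponent (sInf {i | homogeneousComponent i b ≠ 0}) b ≠ 0 :=
    Nat.sInf_mem hSb
  have hbound_a : ∀ i, homogeneousComponent i a ≠ 0 →
      sInf {i | homogeneousComponent i a ≠ 0} ≤ i ∧ i ≤ a.totalDegree := by
    intro i hi
    refine ⟨Nat.sInf_le hi, ?_⟩
    by_contra h
    push_neg at h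
    exact hi (homogeneousComponent_eq_zero _ _ h)
  have hbound_b : ∀ i, homogeneousComponent i b ≠ 0 →
      sInf {i | homogeneousComponent i b ≠ 0} ≤ i ∧ i ≤ b.totalDegree := by
    intro i hi
    refine ⟨Nat.sInf_le hi, ?_⟩
    by_contra h
    push_neg at h
    exact hi (homogeneousComponent_eq_zero _ _ h)
  have hla_le := (hbound_a _ hla).1
  have hla_le' := (hbound_a _ hla).2
  have hlb_le' := (hbound_b _ hlb).2
  have h1 : homogeneousComponent (a.totalDegree + b.totalDegree) (a * b)
      = homogeneousComponent a.totalDegree a * homogeneousComponent b.totalDegree b :=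
    hc_mul_proj le_rfl le_rfl (fun i j hi hj hij => by
      have := (hbound_a i hi).2; have := (hbound_b j hj).2; omega)
  have h2 : homogeneousComponent
        (sInf {i | homogeneousComponent i a ≠ 0} + sInf {i | homogeneousComponent i b ≠ 0})
        (a * b)
      = homogeneousComponent (sInf {i | homogeneousComponent i a ≠ 0}) a *
          homogeneousComponent (sInf {i | homogeneousComponent i b ≠ 0}) b :=
    hc_mul_proj hla_le' hlb_le' (fun i j hi hj hij => by
      have := (hbound_a i hi).1; have := (hbound_b j hj).1; omega)
  have hmem : a * b ∈ homogeneousSubmodule (Fin 2) ℂ n :=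
    (mem_homogeneousSubmodule _ _).mpr hab
  have e1 : a.totalDegree + b.totalDegree = n := by
    by_contra h
    rw [homogeneousComponent_of_mem hmem, if_neg h] at h1
    exact mul_ne_zero hta htb h1.symm
  have e2 : sInf {i | homogeneousComponent i a ≠ 0}
      + sInf {i | homogeneousComponent i b ≠ 0} = n := by
    by_contra h
    rw [homogeneousComponent_of_mem hmem, if_neg h] at h2
    exact mul_ne_zero hla hlb h2.symm
  have hlata : sInf {i | homogeneousComponent i a ≠ 0} = a.totalDegree := by omega
  have ea : a = homogeneousComponent a.totalDegree a := by
    conv_lhs => rw [← sum_homogeneousComponent a]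
    rw [Finset.sum_eq_single a.totalDegree]
    · intro i _ hne
      by_contra h
      have h1' := (hbound_a i h).1
      have h2' := (hbound_a i h).2
      omega
    · intro hmem'
      exact absurd (Finset.mem_range.mpr (Nat.lt_succ_self _)) hmem'
  have hlbtb : sInf {i | homogeneousComponent i b ≠ 0} = b.totalDegree := by omega
  have eb : b = homogeneousComponent b.totalDegree b := by
    conv_lhs => rw [← sum_homogeneousComponent b]
    rw [Finset.sum_eq_single b.totalDegree]
    · intro i _ hne
      by_contra h
      have h1' := (hbound_b i h).1
      have h2' := (hbound_b i h).2
      omega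
    · intro hmem'
      exact absurd (Finset.mem_range.mpr (Nat.lt_succ_self _)) hmem'
  refine ⟨?_, ?_, e1⟩
  · have := homogeneousComponent_isHomogeneous a.totalDegree a
    rwa [← ea] at this
  · have := homogeneousComponent_isHomogeneous b.totalDegree b
    rwa [← eb] at this

noncomputable def μ (m k : ℕ) : R2 := X 0 ^ k * X 1 ^ (m - k)

lemma mu_eq (m k : ℕ) :
    μ m k = monomial (Finsupp.single 0 k + Finsupp.single 1 (m - k)) 1 := by
  rw [μ, X_pow_eq_monomial, X_pow_eq_monomial, monomial_mul, one_mul]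

lemma degree_fin2 (u : Fin 2 →₀ ℕ) : u.degree = u 0 + u 1 := by
  have hd : u.degree = ∑ i : Fin 2, u i := by
    rw [Finsupp.degree]
    apply Finset.sum_subset (Finset.subset_univ _)
    intro i _ hi
    exact Finsupp.notMem_support_iff.mp hi
  rw [hd, Fin.sum_univ_two]

lemma mu_homog (m k : ℕ) (hk : k ≤ m) : (μ m k).IsHomogeneous m := by
  rw [mu_eq]
  apply isHomogeneous_monomial
  rw [degree_fin2]
  simp [Finsupp.single_apply]
  omega

lemma mu_li (m N : ℕ) : LinearIndependent ℂ (fun k : Fin N => μ m (k : ℕ)) := by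
  have heq : (fun k : Fin N => μ m (k : ℕ))
      = (basisMonomials (Fin 2) ℂ)
        ∘ (fun k : Fin N => Finsupp.single 0 (k : ℕ) + Finsupp.single 1 (m - (k : ℕ))) := by
    funext k
    rw [mu_eq]
    simp [coe_basisMonomials]
  rw [heq]
  apply (basisMonomials (Fin 2) ℂ).linearIndependent.comp
  intro k l hkl
  have h0 := DFunLike.congr_fun hkl (0 : Fin 2)
  simp [Finsupp.single_apply] at h0
  exact Fin.ext h0

lemma homog_mem_span {m N : ℕ} (hN : m + 1 = N) {h : R2} (hh : h.IsHomogeneous m) :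
    h ∈ Submodule.span ℂ (Set.range (fun k : Fin N => μ m (k : ℕ))) := by
  suffices hs : (∑ v ∈ h.support, monomial v (coeff v h)) ∈
      Submodule.span ℂ (Set.range (fun k : Fin N => μ m (k : ℕ))) by
    rw [← as_sum h] at hs
    exact hs
  apply Submodule.sum_mem
  intro u hu
  have hud : u.degree = m := by
    by_contra hne
    exact (mem_support_iff.mp hu) (hh.coeff_eq_zero hne)
  have hsum : u 0 + u 1 = m := by
    rw [degree_fin2] at hud
    exact hud
  have hu0 : u 0 < N := by omega
  have huv : u = Finsupp.single 0 (u 0) + Finsupp.single 1 (m - u 0) := by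
    ext i
    fin_cases i <;> simp [Finsupp.single_apply] <;> omega
  have hmono : (monomial u) (coeff u h) = coeff u h • μ m (u 0) := by
    rw [mu_eq, smul_monomial, smul_eq_mul, mul_one, ← huv]
  rw [hmono]
  exact Submodule.smul_mem _ _ (Submodule.subset_span ⟨⟨u 0, hu0⟩, rfl⟩)

end Stmt14Aux

open Stmt14Aux

/-- Let `q₁, q₂` be nonzero quadratic forms in `ℂ[Y,Z]` and `g` a common divisor of
maximal degree `d`.  Then the space of pairs `(f₁,f₂)` of cubic forms with
`f₁·q₂ + f₂·q₁ = 0` has dimension `2 + d`; moreover if `d = 0` (no common non-constant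
divisor) this space is exactly `{(q₁·h, −q₂·h) : h linear}`. -/
theorem stmt14 (q₁ q₂ g : R2) (d : ℕ)
    (hq₁ : q₁.IsHomogeneous 2) (hq₁0 : q₁ ≠ 0)
    (hq₂ : q₂.IsHomogeneous 2) (hq₂0 : q₂ ≠ 0)
    (hg₁ : g ∣ q₁) (hg₂ : g ∣ q₂) (hgd : g.totalDegree = d)
    (hmax : ∀ g' : R2, g' ∣ q₁ → g' ∣ q₂ → g'.totalDegree ≤ d) :
    (∃ bas : Fin (2 + d) → R2 × R2,
      LinearIndependent ℂ bas ∧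
      (∀ k, (bas k).1.IsHomogeneous 3 ∧ (bas k).2.IsHomogeneous 3 ∧
        (bas k).1 * q₂ + (bas k).2 * q₁ = 0) ∧
      ∀ p : R2 × R2, p.1.IsHomogeneous 3 → p.2.IsHomogeneous 3 →
        p.1 * q₂ + p.2 * q₁ = 0 → p ∈ Submodule.span ℂ (Set.range bas)) ∧
    (d = 0 →
      {p : R2 × R2 | p.1.IsHomogeneous 3 ∧ p.2.IsHomogeneous 3 ∧
          p.1 * q₂ + p.2 * q₁ = 0}
        = {p : R2 × R2 | ∃ h : R2, h.IsHomogeneous 1 ∧ p = (q₁ * h, -(q₂ * h))}) := by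
  classical
  obtain ⟨r₁, e₁⟩ := hg₁
  obtain ⟨r₂, e₂⟩ := hg₂
  have hg0 : g ≠ 0 := fun h => hq₁0 (by rw [e₁, h, zero_mul])
  have hr₁0 : r₁ ≠ 0 := fun h => hq₁0 (by rw [e₁, h, mul_zero])
  have hr₂0 : r₂ ≠ 0 := fun h => hq₂0 (by rw [e₂, h, mul_zero])
  obtain ⟨hgh, hr₁h, hdeg₁⟩ := homog_of_mul hg0 hr₁0 (e₁ ▸ hq₁)
  obtain ⟨-, hr₂h, hdeg₂⟩ := homog_of_mul hg0 hr₂0 (e₂ ▸ hq₂)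
  rw [hgd] at hdeg₁ hdeg₂
  have her₂ : r₂.totalDegree = r₁.totalDegree := by omega
  rw [her₂] at hr₂h
  have hde : d + r₁.totalDegree = 2 := hdeg₁
  -- coprimality of the cofactors
  have hrel : IsRelPrime r₁ r₂ := by
    intro w hw₁ hw₂
    obtain ⟨c, hc⟩ := hw₁
    have hw0 : w ≠ 0 := fun h => hr₁0 (by rw [hc, h, zero_mul])
    have hc0 : c ≠ 0 := fun h => hr₁0 (by rw [hc, h, mul_zero])
    obtain ⟨hwh, -, hwd⟩ := homog_of_mul hw0 hc0 (hc ▸ hr₁h)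
    have hdvd₁ : g * w ∣ q₁ := by
      rw [e₁, hc]; exact ⟨c, by ring⟩
    have hdvd₂ : g * w ∣ q₂ := by
      obtain ⟨c₂, hc₂⟩ := hw₂
      rw [e₂, hc₂]; exact ⟨c₂, by ring⟩
    have hle := hmax (g * w) hdvd₁ hdvd₂
    have hgw : (g * w).IsHomogeneous (d + w.totalDegree) := (hgd ▸ hgh).mul hwh
    have hgw0 : g * w ≠ 0 := mul_ne_zero hg0 hw0
    have hgwd : (g * w).totalDegree = d + w.totalDegree := hgw.totalDegree hgw0
    have hw_deg : w.totalDegree = 0 := by omega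
    have hwC : w = C (coeff 0 w) := by
      have h0 : homogeneousComponent 0 w = w := by
        rw [homogeneousComponent_of_mem
          ((mem_homogeneousSubmodule _ _).mpr (hw_deg ▸ hwh)), if_pos rfl]
      rw [← homogeneousComponent_zero]
      exact h0.symm
    have hcoef : coeff 0 w ≠ 0 := fun h => hw0 (by rw [hwC, h, C_0])
    rw [hwC]
    exact (isUnit_iff_ne_zero.mpr hcoef).map (C : ℂ →+* R2)
  -- characterization of solutions
  have solchar : ∀ f₁ f₂ : R2, f₁ * q₂ + f₂ * q₁ = 0 →
      ∃ h : R2, f₁ = r₁ * h ∧ f₂ = -(r₂ * h) := by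
    intro f₁ f₂ heq
    rw [e₁, e₂] at heq
    have hg' : g * (f₁ * r₂ + f₂ * r₁) = 0 := by linear_combination heq
    have key : f₁ * r₂ + f₂ * r₁ = 0 := by
      rcases mul_eq_zero.mp hg' with h | h
      · exact absurd h hg0
      · exact h
    have hdvd : r₁ ∣ f₁ := hrel.dvd_of_dvd_mul_right ⟨-f₂, by linear_combination key⟩
    obtain ⟨h, hh⟩ := hdvd
    refine ⟨h, hh, ?_⟩
    rw [hh] at key
    have hz : r₁ * (f₂ + r₂ * h) = 0 := by linear_combination key
    rcases mul_eq_zero.mp hz with h' | h'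
    · exact absurd h' hr₁0
    · linear_combination h'
  have solhom : ∀ f₁ h : R2, f₁.IsHomogeneous 3 → f₁ = r₁ * h → h.IsHomogeneous (d + 1) := by
    intro f₁ h h3 hf
    by_cases h0 : h = 0
    · rw [h0]; exact isHomogeneous_zero _ _ _
    · obtain ⟨-, hhh, hds⟩ := homog_of_mul hr₁0 h0 (hf ▸ h3)
      have : h.totalDegree = d + 1 := by omega
      exact this ▸ hhh
  have mk_sol : ∀ h : R2, h.IsHomogeneous (d + 1) →
      (r₁ * h).IsHomogeneous 3 ∧ (r₂ * h).IsHomogeneous 3 ∧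
        (r₁ * h) * q₂ + (-(r₂ * h)) * q₁ = 0 := by
    intro h hh
    have h3 : r₁.totalDegree + (d + 1) = 3 := by omega
    refine ⟨h3 ▸ hr₁h.mul hh, h3 ▸ hr₂h.mul hh, ?_⟩
    rw [e₁, e₂]; ring
  -- the linear map
  set Φ : R2 →ₗ[ℂ] R2 × R2 :=
    LinearMap.prod (LinearMap.mulLeft ℂ r₁) (-(LinearMap.mulLeft ℂ r₂)) with hΦdef
  have hΦ : ∀ p : R2, Φ p = (r₁ * p, -(r₂ * p)) := fun p => rfl
  have hker : LinearMap.ker Φ = ⊥ := by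
    rw [LinearMap.ker_eq_bot']
    intro p hp
    have h1 : r₁ * p = 0 := congrArg Prod.fst hp
    rcases mul_eq_zero.mp h1 with h | h
    · exact absurd h hr₁0
    · exact h
  set bas : Fin (2 + d) → R2 × R2 :=
    fun k => (r₁ * μ (d + 1) (k : ℕ), -(r₂ * μ (d + 1) (k : ℕ))) with hbasdef
  have hbas : bas = ⇑Φ ∘ (fun k : Fin (2 + d) => μ (d + 1) (k : ℕ)) := rfl
  constructor
  · refine ⟨bas, ?_, ?_, ?_⟩
    · rw [hbas]
      exact (mu_li (d + 1) (2 + d)).map' Φ hker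
    · intro k
      have hk : (k : ℕ) ≤ d + 1 := by omega
      obtain ⟨hA, hB, hC⟩ := mk_sol _ (mu_homog (d + 1) (k : ℕ) hk)
      exact ⟨hA, hB.neg, hC⟩
    · intro p h1 h2 heq
      obtain ⟨h, hf₁, hf₂⟩ := solchar p.1 p.2 heq
      have hh : h.IsHomogeneous (d + 1) := solhom p.1 h h1 hf₁
      have hpeq : p = Φ h := by
        rw [hΦ]
        exact Prod.ext hf₁ hf₂
      have hspan : h ∈ Submodule.span ℂ
          (Set.range (fun k : Fin (2 + d) => μ (d + 1) (k : ℕ))) :=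
        homog_mem_span (by omega) hh
      have := Submodule.mem_map_of_mem (f := Φ) hspan
      rw [Submodule.map_span, ← Set.range_comp, ← hbas] at this
      rw [hpeq]
      exact this
  · intro hd0
    subst hd0
    have hgC : g = C (coeff 0 g) := by
      have h0 : homogeneousComponent 0 g = g := by
        rw [homogeneousComponent_of_mem
          ((mem_homogeneousSubmodule _ _).mpr (hgd ▸ hgh : g.IsHomogeneous 0)), if_pos rfl]
      rw [← homogeneousComponent_zero]
      exact h0.symm
    set c : ℂ := coeff 0 g with hcdef
    have hc0 : c ≠ 0 := fun h => hg0 (by rw [hgC, h, C_0])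
    have hCc : (C c : R2) * C c⁻¹ = 1 := by
      rw [← C_mul, mul_inv_cancel₀ hc0, C_1]
    ext p
    simp only [Set.mem_setOf_eq]
    constructor
    · rintro ⟨h1, h2, heq⟩
      obtain ⟨h, hf₁, hf₂⟩ := solchar p.1 p.2 heq
      have hh : h.IsHomogeneous 1 := solhom p.1 h h1 hf₁
      refine ⟨C c⁻¹ * h, hh.C_mul _, ?_⟩
      have e1' : q₁ * (C c⁻¹ * h) = r₁ * h := by
        calc q₁ * (C c⁻¹ * h) = (C c * C c⁻¹) * (r₁ * h) := by
              rw [e₁, hgC]; ring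
          _ = r₁ * h := by rw [hCc, one_mul]
      have e2' : q₂ * (C c⁻¹ * h) = r₂ * h := by
        calc q₂ * (C c⁻¹ * h) = (C c * C c⁻¹) * (r₂ * h) := by
              rw [e₂, hgC]; ring
          _ = r₂ * h := by rw [hCc, one_mul]
      rw [e1', e2']
      exact Prod.ext hf₁ hf₂
    · rintro ⟨h, hh, rfl⟩
      refine ⟨?_, ?_, by ring⟩
      · have := hq₁.mul hh
        norm_num at this
        exact this
      · have := (hq₂.mul hh).neg
        norm_num at this
        exact this
end

section
/- Let x₁, x₂ be linearly independent linear forms and y₁, y₂ linearly independent linear forms in ℂ[X,Y,Z]. Then the set of quadruples (v₁, v₂, u₁, u₂) of cubic forms satisfying vᵢ·xⱼ + yᵢ·uⱼ = 0 for all i, j ∈ {1,2} is exactly {(y₁·w, y₂·w, −x₁·w, −x₂·w) : w a quadratic form}; in particular it is a ℂ-vector space of dimension 6. (This is the kernel computation underlying the fibre ℙ²⁵ in the description of the codimension-8 stratum X₆ of M_{P²}(6,3) as a bundle over ℙ² × ℙ².) -/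
/-!
A nonzero linear form is prime in `ℂ[X,Y,Z]`, and it cannot divide two linearly
independent linear forms. Since `y₁ ∣ v₁ xⱼ` for `j = 1, 2`, we get `v₁ = y₁ w`;
cancelling `y₁` and `x₁` in the remaining equations gives `uⱼ = -xⱼ w` and `v₂ = y₂ w`,
with `w` quadratic because `v₁` is cubic. The solutions are thus the injective image
of the quadratic forms in three variables, a space of dimension `binom(4, 2) = 6`.
-/

open MvPolynomial

/-- The set of quadruples `(v₁,v₂,u₁,u₂)` of cubic forms satisfying
`vᵢ·xⱼ + yᵢ·uⱼ = 0` for all `i,j ∈ {1,2}`. -/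
def SolSet (x₁ x₂ y₁ y₂ : R3) : Set (R3 × R3 × R3 × R3) :=
  {p | p.1.IsHomogeneous 3 ∧ p.2.1.IsHomogeneous 3 ∧ p.2.2.1.IsHomogeneous 3 ∧
    p.2.2.2.IsHomogeneous 3 ∧
    p.1 * x₁ + y₁ * p.2.2.1 = 0 ∧ p.1 * x₂ + y₁ * p.2.2.2 = 0 ∧
    p.2.1 * x₁ + y₂ * p.2.2.1 = 0 ∧ p.2.1 * x₂ + y₂ * p.2.2.2 = 0}

namespace MvPolynomial

variable {σ R K : Type*} [CommRing R] [Field K]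

attribute [local instance] MvPolynomial.gradedAlgebra in
theorem IsHomogeneous.homogeneousComponent_mul_left {a : MvPolynomial σ R} {m : ℕ}
    (ha : a.IsHomogeneous m) (b : MvPolynomial σ R) (k : ℕ) :
    homogeneousComponent (m + k) (a * b) = a * homogeneousComponent k b := by
  rw [← decomposition.decompose'_apply, ← decomposition.decompose'_apply]
  exact DirectSum.coe_decompose_mul_add_of_left_mem _ ((mem_homogeneousSubmodule _ _).mpr ha)

theorem IsHomogeneous.of_mul_left [IsDomain R] {a b : MvPolynomial σ R} {m n : ℕ}
    (ha : a.IsHomogeneous m) (ha0 : a ≠ 0) (hab : (a * b).IsHomogeneous (m + n)) :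
    b.IsHomogeneous n := by
  intro d hd
  by_contra hdn
  rw [Pi.one_def, ← Finsupp.degree_eq_weight_one] at hdn
  have hcomp : homogeneousComponent d.degree b = 0 := by
    refine (mul_eq_zero.mp ?_).resolve_left ha0
    rw [← ha.homogeneousComponent_mul_left, homogeneousComponent_of_mem hab, if_neg (by omega)]
  simpa [coeff_homogeneousComponent, hd] using congr(coeff d $hcomp)

theorem IsHomogeneous.eq_C_mul_of_dvd [IsDomain R] {x y : MvPolynomial σ R}
    (hx : x.IsHomogeneous 1) (hy : y.IsHomogeneous 1) (hy0 : y ≠ 0) (hyx : y ∣ x) :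
    ∃ c, x = C c * y := by
  obtain ⟨a, rfl⟩ := hyx
  have ha : a.totalDegree = 0 :=
    (totalDegree_zero_iff_isHomogeneous σ).mpr (hy.of_mul_left hy0 hx)
  exact ⟨coeff 0 a, by rw [mul_comm, ← totalDegree_eq_zero_iff_eq_C.mp ha]⟩

theorem prime_of_totalDegree_eq_one {p : MvPolynomial σ K} (hp : p.totalDegree = 1) :
    Prime p := by
  refine UniqueFactorizationMonoid.irreducible_iff_prime.mp
    (irreducible_of_totalDegree_eq_one hp fun c hc => isUnit_iff_ne_zero.mpr fun hc0 => ?_)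
  subst hc0
  have : p = 0 := ext _ _ fun d => zero_dvd_iff.mp (hc d)
  simp [this] at hp

theorem IsHomogeneous.not_dvd_and_dvd_of_linearIndependent {x₁ x₂ y : MvPolynomial σ K}
    (hy : y.IsHomogeneous 1) (hy0 : y ≠ 0)
    (hx₁ : x₁.IsHomogeneous 1) (hx₂ : x₂.IsHomogeneous 1)
    (hxI : LinearIndependent K ![x₁, x₂]) :
    ¬(y ∣ x₁ ∧ y ∣ x₂) := by
  rintro ⟨h₁, h₂⟩
  obtain ⟨c₁, rfl⟩ := hx₁.eq_C_mul_of_dvd hy hy0 h₁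
  obtain ⟨c₂, rfl⟩ := hx₂.eq_C_mul_of_dvd hy hy0 h₂
  have hc₁ : c₁ = 0 := by
    simpa using (LinearIndependent.pair_iff.mp hxI c₂ (-c₁)
      (by simp only [smul_eq_C_mul, map_neg]; ring)).2
  simpa [hc₁] using hxI.ne_zero 0

theorem finrank_homogeneousSubmodule [Fintype σ] (n : ℕ) :
    Module.finrank K (homogeneousSubmodule σ K n) = (Fintype.card σ + n - 1).choose n := by
  classical
  rw [homogeneousSubmodule_eq_finsupp_supported, ← restrictSupport,
    Module.finrank_eq_nat_card_basis (basisRestrictSupport K {d : σ →₀ ℕ | d.degree = n}),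
    ← Sym.card_sym_eq_choose, ← Nat.card_eq_fintype_card]
  exact Nat.card_congr
    ((Sym.equivNatSum σ n).trans (Equiv.subtypeEquivRight fun _ => Iff.rfl)).symm

end MvPolynomial

theorem Submodule.exists_linearIndependent_spanning_of_finrank_eq {K W : Type*} [DivisionRing K]
    [AddCommGroup W] [Module K W] (N : Submodule K W) [Module.Finite K N] {n : ℕ}
    (h : Module.finrank K N = n) :
    ∃ bas : Fin n → W, LinearIndependent K bas ∧ (∀ k, bas k ∈ N) ∧
      ∀ p ∈ N, p ∈ Submodule.span K (Set.range bas) := by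
  let b := Module.finBasisOfFinrankEq K N h
  refine ⟨N.subtype ∘ b, b.linearIndependent.map' _ N.ker_subtype, fun k => (b k).2,
    fun p hp => ?_⟩
  rwa [Set.range_comp, Submodule.span_image, b.span_eq, Submodule.map_top,
    Submodule.range_subtype]

section SyzygyMap

variable (K : Type*) {A : Type*} [CommSemiring K] [CommRing A] [Algebra K A]

noncomputable def syzygyMap (x₁ x₂ y₁ y₂ : A) : A →ₗ[K] A × A × A × A :=
  (LinearMap.mulLeft K y₁).prod <| (LinearMap.mulLeft K y₂).prod <|
    (-LinearMap.mulLeft K x₁).prod (-LinearMap.mulLeft K x₂)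

@[simp]
theorem syzygyMap_apply (x₁ x₂ y₁ y₂ w : A) :
    syzygyMap K x₁ x₂ y₁ y₂ w = (y₁ * w, y₂ * w, -(x₁ * w), -(x₂ * w)) :=
  rfl

theorem syzygyMap_injective [IsDomain A] {x₁ x₂ y₁ y₂ : A} (hy₁ : y₁ ≠ 0) :
    Function.Injective (syzygyMap K x₁ x₂ y₁ y₂) :=
  fun _ _ h => mul_left_cancel₀ hy₁ congr(Prod.fst $h)

end SyzygyMap

theorem solSet_eq {x₁ x₂ y₁ y₂ : R3}
    (hx₁ : x₁.IsHomogeneous 1) (hx₂ : x₂.IsHomogeneous 1)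
    (hy₁ : y₁.IsHomogeneous 1) (hy₂ : y₂.IsHomogeneous 1)
    (hxI : LinearIndependent ℂ ![x₁, x₂]) (hy₁0 : y₁ ≠ 0) :
    SolSet x₁ x₂ y₁ y₂
      = {p : R3 × R3 × R3 × R3 |
          ∃ w : R3, w.IsHomogeneous 2 ∧ p = (y₁ * w, y₂ * w, -(x₁ * w), -(x₂ * w))} := by
  ext ⟨v₁, v₂, u₁, u₂⟩
  simp only [SolSet, Set.mem_ofPred_eq, Prod.mk.injEq]
  constructor
  · rintro ⟨hv₁, -, -, -, E₁₁, E₁₂, E₂₁, -⟩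
    obtain ⟨w, rfl⟩ : y₁ ∣ v₁ := by
      have hy₁p := prime_of_totalDegree_eq_one (hy₁.totalDegree hy₁0)
      by_contra hv
      refine hy₁.not_dvd_and_dvd_of_linearIndependent hy₁0 hx₁ hx₂ hxI
        ⟨(hy₁p.dvd_or_dvd ?_).resolve_left hv, (hy₁p.dvd_or_dvd ?_).resolve_left hv⟩
      · exact ⟨-u₁, by linear_combination E₁₁⟩
      · exact ⟨-u₂, by linear_combination E₁₂⟩
    have hu₁ : u₁ = -(x₁ * w) := mul_left_cancel₀ hy₁0 (by linear_combination E₁₁)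
    have hu₂ : u₂ = -(x₂ * w) := mul_left_cancel₀ hy₁0 (by linear_combination E₁₂)
    have hv₂ : v₂ = y₂ * w := by
      refine mul_right_cancel₀ (b := x₁) (by simpa using hxI.ne_zero 0) ?_
      linear_combination E₂₁ - y₂ * hu₁
    exact ⟨w, hy₁.of_mul_left hy₁0 hv₁, rfl, hv₂, hu₁, hu₂⟩
  · rintro ⟨w, hw, rfl, rfl, rfl, rfl⟩
    exact ⟨hy₁.mul hw, hy₂.mul hw, (hx₁.mul hw).neg, (hx₂.mul hw).neg, by ring, by ring,
      by ring, by ring⟩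

/-- Let `x₁, x₂` be linearly independent linear forms and `y₁, y₂` linearly independent
linear forms in `ℂ[X,Y,Z]`.  The set of quadruples `(v₁,v₂,u₁,u₂)` of cubic forms with
`vᵢ·xⱼ + yᵢ·uⱼ = 0` for all `i,j` is exactly
`{(y₁·w, y₂·w, −x₁·w, −x₂·w) : w quadratic}`; in particular it is a `ℂ`-vector space
of dimension 6. -/
theorem stmt15 (x₁ x₂ y₁ y₂ : R3)
    (hx₁ : x₁.IsHomogeneous 1) (hx₂ : x₂.IsHomogeneous 1)
    (hy₁ : y₁.IsHomogeneous 1) (hy₂ : y₂.IsHomogeneous 1)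
    (hxI : LinearIndependent ℂ ![x₁, x₂]) (hyI : LinearIndependent ℂ ![y₁, y₂]) :
    SolSet x₁ x₂ y₁ y₂
      = {p : R3 × R3 × R3 × R3 |
          ∃ w : R3, w.IsHomogeneous 2 ∧ p = (y₁ * w, y₂ * w, -(x₁ * w), -(x₂ * w))} ∧
    ∃ bas : Fin 6 → R3 × R3 × R3 × R3,
      LinearIndependent ℂ bas ∧ (∀ k, bas k ∈ SolSet x₁ x₂ y₁ y₂) ∧
      ∀ p ∈ SolSet x₁ x₂ y₁ y₂, p ∈ Submodule.span ℂ (Set.range bas) := by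
  have hy₁0 : y₁ ≠ 0 := by simpa using hyI.ne_zero 0
  have hsol := solSet_eq hx₁ hx₂ hy₁ hy₂ hxI hy₁0
  refine ⟨hsol, ?_⟩
  set N := (homogeneousSubmodule (Fin 3) ℂ 2).map (syzygyMap ℂ x₁ x₂ y₁ y₂)
  have hN : SolSet x₁ x₂ y₁ y₂ = N := by
    ext p
    simp [hsol, N, eq_comm]
  have hrank : Module.finrank ℂ N = 6 := by
    rw [← LinearEquiv.finrank_eq (Submodule.equivMapOfInjective _
      (syzygyMap_injective ℂ hy₁0) _), finrank_homogeneousSubmodule]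
    rfl
  have : Module.Finite ℂ N := Module.finite_of_finrank_pos (by omega)
  simpa only [hN, SetLike.mem_coe] using N.exists_linearIndependent_spanning_of_finrank_eq hrank
end
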